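/- arXiv:2009.07422 — 4 statements merged into one kernel-verified Lean document; each statement's English description precedes it below -/
import Mathlib

section
/- Let m ≥ 1 be an odd integer, a = m²+1, k ≥ 1 an integer, and q = 2ak+2a−m an odd prime power; set n = (q²+1)/a and s = (n−1)/2. Fix an integer α with 1 ≤ α ≤ k. Define T₁ ⊆ Z/nZ as the union of the cyclotomic cosets C_{uq+v} over all odd integers t with −m ≤ t ≤ (2m−1)m, where the integer h attached to t is: h = 2 if −m ≤ t ≤ −1, and h = 2−j if (2j−2)m+1 ≤ t ≤ min(2jm−1, (2m−1)m) for j = 1, ..., m; over all integers v with s+(m+t)(k+1)+h+α ≤ v ≤ s+(m+t+2)(k+1)+(h−3)−α; and over all integers u with 0 ≤ u ≤ α if v ≤ s+(2a−m)k+2(a−m), and 0 ≤ u ≤ α−1 otherwise. Then T₁ ∩ (−qT₁) = ∅. -/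
private lemma convert_elt (m K s α t h v : ℤ) (hm : 1 ≤ m) (hmodd : Odd m) (htodd : Odd t)
    (hh : (-m ≤ t ∧ t ≤ -1 ∧ h = 2) ∨
      (∃ jj : ℤ, 1 ≤ jj ∧ jj ≤ m ∧ (2 * jj - 2) * m + 1 ≤ t ∧
        t ≤ min (2 * jj * m - 1) ((2 * m - 1) * m) ∧ h = 2 - jj))
    (hv1 : s + (m + t) * K + h + α ≤ v)
    (hv2 : v ≤ s + (m + t + 2) * K + (h - 3) - α) :
    ∃ j i : ℤ, 0 ≤ j ∧ j ≤ m ∧ 1 - m ≤ 2 * i ∧ 2 * i ≤ m - 1 ∧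
      2 - j + α ≤ v - s - 2 * (j * m + i) * K ∧
      v - s - 2 * (j * m + i) * K ≤ 2 * K - 1 - j - α := by
  obtain ⟨m1, hm1⟩ := hmodd
  obtain ⟨t1, ht1⟩ := htodd
  rcases hh with ⟨ha1, ha2, ha3⟩ | ⟨jj, hb1, hb2, hb3, hb4, hb5⟩
  · refine ⟨0, m1 + t1 + 1, le_refl 0, by linarith, by linarith, by linarith, ?_, ?_⟩
    · have hr : 2 * ((0:ℤ) * m + (m1 + t1 + 1)) * K = (m + t) * K := by
        linear_combination (-K) * hm1 - K * ht1
      linarith [hv1, hr]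
    · have hr : 2 * ((0:ℤ) * m + (m1 + t1 + 1)) * K = (m + t) * K := by
        linear_combination (-K) * hm1 - K * ht1
      linarith [hv2, hr]
  · have hb4' : t ≤ 2 * jj * m - 1 := le_trans hb4 (min_le_left _ _)
    have e1 : (2 * jj - 2) * m = 2 * (jj * m) - 2 * m := by ring
    have e2 : 2 * jj * m = 2 * (jj * m) := by ring
    have hr2 : 2 * ((m1 + t1 + 1) - jj * m) = m + t - 2 * (jj * m) := by
      linear_combination (-1 : ℤ) * hm1 - ht1
    have hrK : 2 * (jj * m + ((m1 + t1 + 1) - jj * m)) * K = (m + t) * K := by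
      linear_combination (-K) * hm1 - K * ht1
    exact ⟨jj, (m1 + t1 + 1) - jj * m, by linarith, hb2,
      by linarith [hb3, e1, hr2], by linarith [hb4', e2, hr2],
      by linarith [hv1, hrK, hb5], by linarith [hv2, hrK, hb5]⟩


set_option maxHeartbeats 800000 in
private lemma coreA (m K α s q n m₀ : ℤ)
    (hm : 1 ≤ m) (hm₀ : m = 2 * m₀ + 1) (hK : 2 ≤ K) (hα : 1 ≤ α)
    (hq : q = 2 * (m * m + 1) * K - m) (hn : n = 4 * (m * m + 1) * K * K - 4 * m * K + 1)
    (hs : 2 * s + 1 = n)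
    (j i O u j' i' O' u' : ℤ)
    (hj0 : 0 ≤ j) (hjm : j ≤ m) (hi1 : 1 - m ≤ 2 * i) (hi2 : 2 * i ≤ m - 1)
    (hO1 : 2 - j + α ≤ O) (hO2 : O ≤ 2 * K - 1 - j - α) (hu0 : 0 ≤ u) (huα : u ≤ α)
    (hj0' : 0 ≤ j') (hjm' : j' ≤ m) (hi1' : 1 - m ≤ 2 * i') (hi2' : 2 * i' ≤ m - 1)
    (hO1' : 2 - j' + α ≤ O') (hO2' : O' ≤ 2 * K - 1 - j' - α) (hu0' : 0 ≤ u') (huα' : u' ≤ α)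
    (hdvd : n ∣ (u * q + (s + 2 * (j * m + i) * K + O)) +
      ((s + 2 * (j' * m + i') * K + O') * q - u')) : False := by
  have hm0 : (0:ℤ) ≤ m := by linarith only [hm]
  have hK0 : (0:ℤ) ≤ K := by linarith only [hK]
  have hP2 : (0:ℤ) ≤ m * (K - 2) := mul_nonneg hm0 (by linarith only [hK])
  have hP3 : (0:ℤ) ≤ m * (m - 1 - 2 * i') := mul_nonneg hm0 (by linarith only [hi2'])
  have hP4 : (0:ℤ) ≤ m * (2 * i' + m - 1) := mul_nonneg hm0 (by linarith only [hi1'])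
  have hP5 : (0:ℤ) ≤ m * (m - j) := mul_nonneg hm0 (by linarith only [hjm])
  have hP6 : (0:ℤ) ≤ j * m := mul_nonneg hj0 hm0
  have hP7 : (0:ℤ) ≤ m * (m - 1) := mul_nonneg hm0 (by linarith only [hm])
  have hP8 : (0:ℤ) ≤ (m * (m - 1)) * K := mul_nonneg hP7 hK0
  have hq0 : (0:ℤ) < q := by linarith only [hq, hP2, hP8, hm, hK]
  have hKK : (0:ℤ) < K * K := mul_pos (by linarith only [hK]) (by linarith only [hK])
  have hn0 : (0:ℤ) < n := by nlinarith only [hn, sq_nonneg (2 * m * K - 1), hKK]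
  obtain ⟨d, hd⟩ := hdvd
  have hd2 : (2*u + 2*O' + 2*j' - 1) * q
      + (4*m*i' + 4*j*m + 4*i - 4*j') * K + (2*O - 2*u' - 2*i' - 1)
      = n * (2*d - (q + 1 + 2*(j'*m + i'))) := by
    linear_combination 2 * hd + (2*j' - 4*(j'*m + i')*K) * hq + 2*(j'*m + i') * hn
      - (1 + q) * hs
  set e : ℤ := 2*d - (q + 1 + 2*(j'*m + i')) with he_def
  have hC1 : 2*α + 3 ≤ 2*u + 2*O' + 2*j' - 1 := by linarith only [hu0, hO1']
  have hC2 : 2*u + 2*O' + 2*j' - 1 ≤ 4*K - 3 := by linarith only [huα, hO2']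
  have pLu : 4*m*i' + 4*j*m + 4*i - 4*j' ≤ 6*m*m - 2 := by
    linarith only [hP3, hP5, hi2, hj0']
  have pLl : -(2*m*m + 4*m - 2) ≤ 4*m*i' + 4*j*m + 4*i - 4*j' := by
    linarith only [hP4, hP6, hi1, hjm']
  have hth1 : 4 - 2*j - m ≤ 2*O - 2*u' - 2*i' - 1 := by
    linarith only [hO1, huα', hi2', hα]
  have hth2 : 2*O - 2*u' - 2*i' - 1 ≤ 4*K - 3 - 2*j - 2*α - 2*i' := by
    linarith only [hO2, hu0']
  have hth2' : 2*O - 2*u' - 2*i' - 1 ≤ 4*K + m - 4 - 2*j - 2*α := by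
    linarith only [hO2, hu0', hi1']
  have e1 : (5:ℤ) * q ≤ (2*u + 2*O' + 2*j' - 1) * q :=
    mul_le_mul_of_nonneg_right (by linarith only [hC1, hα]) (le_of_lt hq0)
  have e1' : (2*u + 2*O' + 2*j' - 1) * q ≤ (4*K - 3) * q :=
    mul_le_mul_of_nonneg_right hC2 (le_of_lt hq0)
  have e2 : (-(2*m*m + 4*m - 2)) * K ≤ (4*m*i' + 4*j*m + 4*i - 4*j') * K :=
    mul_le_mul_of_nonneg_right pLl hK0
  have e2' : (4*m*i' + 4*j*m + 4*i - 4*j') * K ≤ (6*m*m - 2) * K :=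
    mul_le_mul_of_nonneg_right pLu hK0
  have haux1 : (0:ℤ) < 5 * q + (-(2*m*m + 4*m - 2)) * K + (4 - 2*j - m) := by
    nlinarith only [hq, hjm, hP7, hm, hK,
      mul_nonneg (show (0:ℤ) ≤ 8*m*m - 4*m + 12 by nlinarith only [hP7, hm])
        (show (0:ℤ) ≤ K - 2 by linarith only [hK])]
  have hT0 : 0 < (2*u + 2*O' + 2*j' - 1) * q
      + (4*m*i' + 4*j*m + 4*i - 4*j') * K + (2*O - 2*u' - 2*i' - 1) := by
    linarith only [e1, e2, hth1, haux1]
  have hKq : (4*K - 3) * q = (4*K - 3) * (2*(m*m+1)*K - m) := by rw [hq]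
  have haux2 : (4*K - 3) * q + (6*m*m - 2) * K + (4*K + m - 4 - 2*j - 2*α) < 4 * n := by
    nlinarith only [hKq, hn, hj0, hα, sq_nonneg (m*K - 2), hP7, hm, hK,
      mul_nonneg (mul_nonneg hm0 hm0)
        (show (0:ℤ) ≤ K*K - 4 by nlinarith only [hKK, hK])]
  have hT4 : (2*u + 2*O' + 2*j' - 1) * q
      + (4*m*i' + 4*j*m + 4*i - 4*j') * K + (2*O - 2*u' - 2*i' - 1) < 4 * n := by
    linarith only [e1', e2', hth2', haux2]
  have he1 : 0 < e := by
    by_contra hc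
    push_neg at hc
    have hne : n * e ≤ 0 := mul_nonpos_iff.mpr (Or.inl ⟨le_of_lt hn0, hc⟩)
    linarith only [hd2, hT0, hne]
  have he4 : e < 4 := by
    by_contra hc
    push_neg at hc
    have hne : n * 4 ≤ n * e := mul_le_mul_of_nonneg_left hc (le_of_lt hn0)
    linarith only [hd2, hT4, hne]
  have hEv : (2*u + 2*O' + 2*j' - 1) * q
      + (4*m*i' + 4*j*m + 4*i - 4*j') * K + (2*O - 2*u' - 2*i' - 1)
      = 2 * ((u + O' + j') * q + (2*m*i' + 2*j*m + 2*i - 2*j') * K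
        + O - u' - i' - (m*m+1)*K + m₀) := by
    linear_combination hm₀ - hq
  have hee : e = 2 * (((u + O' + j') * q + (2*m*i' + 2*j*m + 2*i - 2*j') * K
      + O - u' - i' - (m*m+1)*K + m₀) - s * e) := by
    linear_combination hEv - hd2 + e * hs
  obtain ⟨e₁, he₁⟩ : ∃ x : ℤ, e = 2 * x := ⟨_, hee⟩
  have he2 : e = 2 := by omega
  rw [he2] at hd2
  have hR : (4*K - (2*u + 2*O' + 2*j' - 1)) * q
      = (4*m*i' + 4*j*m + 4*i - 4*j') * K + (2*O - 2*u' - 2*i' - 1) + 4*m*K - 2 := by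
    linear_combination -hd2 - 2*hn + 4*K*hq
  have haux3 : (6*m*m - 2) * K + (4*K + m - 4 - 2*j - 2*α) + 4*m*K - 2 < 5 * q := by
    nlinarith only [hq, hj0, hα, hP7, hm, hK,
      mul_nonneg (show (0:ℤ) ≤ 4*m*m - 4*m + 8 by nlinarith only [hP7, hm])
        (show (0:ℤ) ≤ K - 2 by linarith only [hK])]
  have hR5 : (4*m*i' + 4*j*m + 4*i - 4*j') * K + (2*O - 2*u' - 2*i' - 1) + 4*m*K - 2
      < 5 * q := by
    linarith only [e2', hth2', haux3]
  have h45 : 4*K - (2*u + 2*O' + 2*j' - 1) < 5 := by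
    by_contra hc
    push_neg at hc
    have h5 := mul_le_mul_of_nonneg_right hc (le_of_lt hq0)
    linarith only [hR, hR5, h5]
  obtain ⟨c₁, hc₁⟩ : ∃ x : ℤ, 4*K - (2*u + 2*O' + 2*j' - 1) = 2*x + 1 :=
    ⟨2*K - u - O' - j', by ring⟩
  have hC43 : 2*u + 2*O' + 2*j' - 1 = 4*K - 3 := by omega
  have hMK : (6*(m*m+1) - 4*m - (4*m*i' + 4*j*m + 4*i - 4*j')) * K
      = (2*O - 2*u' - 2*i' - 1) + 3*m - 2 := by
    linear_combination hR - 3*hq + q*hC43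
  have hMKlow : 2 ≤ (6*(m*m+1) - 4*m - (4*m*i' + 4*j*m + 4*i - 4*j')) * K := by
    linarith only [hMK, hth1, hjm]
  have hM1 : 1 ≤ 6*(m*m+1) - 4*m - (4*m*i' + 4*j*m + 4*i - 4*j') := by
    by_contra hc
    push_neg at hc
    have hMk : (6*(m*m+1) - 4*m - (4*m*i' + 4*j*m + 4*i - 4*j')) * K ≤ 0 :=
      mul_nonpos_iff.mpr (Or.inr ⟨by linarith only [hc], hK0⟩)
    linarith only [hMk, hMKlow]
  obtain ⟨M₁, hM₁⟩ : ∃ x : ℤ, 6*(m*m+1) - 4*m - (4*m*i' + 4*j*m + 4*i - 4*j') = 4 * x :=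
    ⟨6*m₀*m₀ + 4*m₀ + 2 - m*i' - j*m - i + j', by linear_combination (6*m + 12*m₀ + 2) * hm₀⟩
  have hM₁1 : 1 ≤ M₁ := by
    have h' := hM1
    rw [hM₁] at h'
    omega
  have hM4 : 4 ≤ 6*(m*m+1) - 4*m - (4*m*i' + 4*j*m + 4*i - 4*j') := by
    rw [hM₁]; omega
  have key1 : (6*(m*m+1) - 4*m - (4*m*i' + 4*j*m + 4*i - 4*j')) * K
      ≤ 4*K + (3*m - 5 - 2*j - 2*α - 2*i') := by linarith only [hMK, hth2]
  have key2 : 6*m*m - 6*m + 8 - (6*(m*m+1) - 4*m - (4*m*i' + 4*j*m + 4*i - 4*j'))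
      ≤ 4*(m*i') + 4*(j*m) := by linarith only [hi2, hj0']
  have hfin1 : (4*m) * ((6*(m*m+1) - 4*m - (4*m*i' + 4*j*m + 4*i - 4*j')) * K)
      ≤ (4*m) * (4*K + (3*m - 5 - 2*j - 2*α - 2*i')) :=
    mul_le_mul_of_nonneg_left key1 (by linarith only [hm])
  have hfin2 : 0 ≤ ((6*(m*m+1) - 4*m - (4*m*i' + 4*j*m + 4*i - 4*j')) - 4) * ((4*m)*K - 2) :=
    mul_nonneg (by linarith only [hM4]) (by linarith only [hP2, hm])
  have hfin3 : 0 ≤ m * α := mul_nonneg hm0 (by linarith only [hα])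
  nlinarith only [hfin1, hfin2, hfin3, key2, hm]

set_option maxHeartbeats 800000 in
private lemma coreB (m K α s q n m₀ : ℤ)
    (hm : 1 ≤ m) (hm₀ : m = 2 * m₀ + 1) (hK : 2 ≤ K) (hα : 1 ≤ α)
    (hq : q = 2 * (m * m + 1) * K - m) (hn : n = 4 * (m * m + 1) * K * K - 4 * m * K + 1)
    (hs : 2 * s + 1 = n)
    (j i O u j' i' O' u' : ℤ)
    (hj0 : 0 ≤ j) (hjm : j ≤ m) (hi1 : 1 - m ≤ 2 * i) (hi2 : 2 * i ≤ m - 1)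
    (hO1 : 2 - j + α ≤ O) (hO2 : O ≤ 2 * K - 1 - j - α) (hu0 : 0 ≤ u) (huα : u ≤ α)
    (hj0' : 0 ≤ j') (hjm' : j' ≤ m) (hi1' : 1 - m ≤ 2 * i') (hi2' : 2 * i' ≤ m - 1)
    (hO1' : 2 - j' + α ≤ O') (hO2' : O' ≤ 2 * K - 1 - j' - α) (hu0' : 0 ≤ u') (huα' : u' ≤ α)
    (hdvd : n ∣ (u * q + (s + 2 * (j * m + i) * K + O)) -
      ((s + 2 * (j' * m + i') * K + O') * q - u')) : False := by
  have hm0 : (0:ℤ) ≤ m := by linarith only [hm]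
  have hK0 : (0:ℤ) ≤ K := by linarith only [hK]
  have hP2 : (0:ℤ) ≤ m * (K - 2) := mul_nonneg hm0 (by linarith only [hK])
  have hP3 : (0:ℤ) ≤ m * (m - 1 - 2 * i') := mul_nonneg hm0 (by linarith only [hi2'])
  have hP4 : (0:ℤ) ≤ m * (2 * i' + m - 1) := mul_nonneg hm0 (by linarith only [hi1'])
  have hP5 : (0:ℤ) ≤ m * (m - j) := mul_nonneg hm0 (by linarith only [hjm])
  have hP6 : (0:ℤ) ≤ j * m := mul_nonneg hj0 hm0
  have hP7 : (0:ℤ) ≤ m * (m - 1) := mul_nonneg hm0 (by linarith only [hm])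
  have hP8 : (0:ℤ) ≤ (m * (m - 1)) * K := mul_nonneg hP7 hK0
  have hq0 : (0:ℤ) < q := by linarith only [hq, hP2, hP8, hm, hK]
  have hKK : (0:ℤ) < K * K := mul_pos (by linarith only [hK]) (by linarith only [hK])
  have hn0 : (0:ℤ) < n := by nlinarith only [hn, sq_nonneg (2 * m * K - 1), hKK]
  obtain ⟨d, hd⟩ := hdvd
  have hd2 : (2*u - 2*O' - 2*j' + 1) * q
      + (4*j' - 4*m*i' + 4*j*m + 4*i) * K + (2*i' + 2*O + 2*u' - 1)
      = n * (2*d - (1 - q - 2*(j'*m + i'))) := by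
    linear_combination 2 * hd + (4*(j'*m + i')*K - 2*j') * hq - 2*(j'*m + i') * hn
      + (q - 1) * hs
  set e : ℤ := 2*d - (1 - q - 2*(j'*m + i')) with he_def
  have hCB1 : 2*α + 3 - 4*K ≤ 2*u - 2*O' - 2*j' + 1 := by linarith only [hu0, hO2']
  have hCB2 : 2*u - 2*O' - 2*j' + 1 ≤ -3 := by linarith only [huα, hO1']
  have pLBu : 4*j' - 4*m*i' + 4*j*m + 4*i ≤ 6*m*m + 4*m - 2 := by
    linarith only [hP4, hP5, hjm', hi2]
  have pLBl : -(2*m*m - 2) ≤ 4*j' - 4*m*i' + 4*j*m + 4*i := by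
    linarith only [hP3, hP6, hj0', hi1]
  have hthB1 : 2*α + 4 - 2*j - m ≤ 2*i' + 2*O + 2*u' - 1 := by
    linarith only [hO1, hu0', hi1']
  have hthB2 : 2*i' + 2*O + 2*u' - 1 ≤ 2*i' + 4*K - 3 - 2*j := by
    linarith only [hO2, huα', hα]
  have hthB2' : 2*i' + 2*O + 2*u' - 1 ≤ 4*K + m - 4 - 2*j := by
    linarith only [hO2, huα', hα, hi2']
  have e1 : (2*u - 2*O' - 2*j' + 1) * q ≤ (-3) * q :=
    mul_le_mul_of_nonneg_right hCB2 (le_of_lt hq0)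
  have e1' : (2*α + 3 - 4*K) * q ≤ (2*u - 2*O' - 2*j' + 1) * q :=
    mul_le_mul_of_nonneg_right hCB1 (le_of_lt hq0)
  have e2 : (4*j' - 4*m*i' + 4*j*m + 4*i) * K ≤ (6*m*m + 4*m - 2) * K :=
    mul_le_mul_of_nonneg_right pLBu hK0
  have e2' : (-(2*m*m - 2)) * K ≤ (4*j' - 4*m*i' + 4*j*m + 4*i) * K :=
    mul_le_mul_of_nonneg_right pLBl hK0
  have haux4 : (-3) * q + (6*m*m + 4*m - 2) * K + (4*K + m - 4 - 2*j) < n := by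
    nlinarith only [hq, hn, hj0, sq_nonneg (m*K - 2), hP7, hm, hK,
      mul_nonneg (mul_nonneg hm0 hm0)
        (show (0:ℤ) ≤ K*K - 4 by nlinarith only [hKK, hK])]
  have hT3lt : (2*u - 2*O' - 2*j' + 1) * q
      + (4*j' - 4*m*i' + 4*j*m + 4*i) * K + (2*i' + 2*O + 2*u' - 1) < n := by
    linarith only [e1, e2, hthB2', haux4]
  have hKq2 : 4*K*q = 4*K*(2*(m*m+1)*K - m) := by rw [hq]
  have haux5 : (0:ℤ) < 5 * q - 4*K*q
      + (-(2*m*m - 2)) * K + (2*α + 4 - 2*j - m) + 2 * n := by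
    nlinarith only [hq, hn, hKq2, hjm, hα, hP7, hm, hK,
      mul_nonneg (show (0:ℤ) ≤ 8*m*m - 4*m + 12 by nlinarith only [hP7, hm])
        (show (0:ℤ) ≤ K - 2 by linarith only [hK])]
  have e5 : (5:ℤ) * q ≤ (2*α + 3) * q :=
    mul_le_mul_of_nonneg_right (by linarith only [hα]) (le_of_lt hq0)
  have hT3gt : -(2 * n) < (2*u - 2*O' - 2*j' + 1) * q
      + (4*j' - 4*m*i' + 4*j*m + 4*i) * K + (2*i' + 2*O + 2*u' - 1) := by
    nlinarith only [e1', e5, e2', hthB1, haux5]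
  have he_lt : e < 1 := by
    by_contra hc
    push_neg at hc
    have hne : n * 1 ≤ n * e := mul_le_mul_of_nonneg_left hc (le_of_lt hn0)
    linarith only [hd2, hT3lt, hne]
  have he_gt : -2 < e := by
    by_contra hc
    push_neg at hc
    have hne : n * e ≤ n * (-2) := mul_le_mul_of_nonneg_left hc (le_of_lt hn0)
    linarith only [hd2, hT3gt, hne]
  have hEv : (2*u - 2*O' - 2*j' + 1) * q
      + (4*j' - 4*m*i' + 4*j*m + 4*i) * K + (2*i' + 2*O + 2*u' - 1)
      = 2 * ((u - O' - j') * q + (2*j' - 2*m*i' + 2*j*m + 2*i) * K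
        + i' + O + u' + (m*m+1)*K - m₀ - 1) := by
    linear_combination hq - hm₀
  have hee : e = 2 * (((u - O' - j') * q + (2*j' - 2*m*i' + 2*j*m + 2*i) * K
      + i' + O + u' + (m*m+1)*K - m₀ - 1) - s * e) := by
    linear_combination hEv - hd2 + e * hs
  obtain ⟨e₁, he₁⟩ : ∃ x : ℤ, e = 2 * x := ⟨_, hee⟩
  have he0 : e = 0 := by omega
  rw [he0] at hd2
  have hRB : (2*O' + 2*j' - 2*u - 1) * q
      = (4*j' - 4*m*i' + 4*j*m + 4*i) * K + (2*i' + 2*O + 2*u' - 1) := by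
    linear_combination -hd2
  have haux6 : (6*m*m + 4*m - 2) * K + (4*K + m - 4 - 2*j) < 5 * q := by
    nlinarith only [hq, hj0, hP7, hm, hK,
      mul_nonneg (show (0:ℤ) ≤ 4*m*m - 4*m + 8 by nlinarith only [hP7, hm])
        (show (0:ℤ) ≤ K - 2 by linarith only [hK])]
  have hRB5 : (4*j' - 4*m*i' + 4*j*m + 4*i) * K + (2*i' + 2*O + 2*u' - 1) < 5 * q := by
    linarith only [e2, hthB2', haux6]
  have hCBlt : 2*O' + 2*j' - 2*u - 1 < 5 := by
    by_contra hc
    push_neg at hc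
    have h5 := mul_le_mul_of_nonneg_right hc (le_of_lt hq0)
    linarith only [hRB, hRB5, h5]
  obtain ⟨c₂, hc₂⟩ : ∃ x : ℤ, 2*O' + 2*j' - 2*u - 1 = 2*x - 1 := ⟨O' + j' - u, by ring⟩
  have hCB3 : 2*O' + 2*j' - 2*u - 1 = 3 := by omega
  have hNK : (6*(m*m+1) - (4*j' - 4*m*i' + 4*j*m + 4*i)) * K
      = (2*i' + 2*O + 2*u' - 1) + 3*m := by
    linear_combination hRB - 3*hq - q*hCB3
  have hNKlow : 2*α + 4 ≤ (6*(m*m+1) - (4*j' - 4*m*i' + 4*j*m + 4*i)) * K := by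
    linarith only [hNK, hthB1, hjm]
  have hN1 : 1 ≤ 6*(m*m+1) - (4*j' - 4*m*i' + 4*j*m + 4*i) := by
    by_contra hc
    push_neg at hc
    have hNk : (6*(m*m+1) - (4*j' - 4*m*i' + 4*j*m + 4*i)) * K ≤ 0 :=
      mul_nonpos_iff.mpr (Or.inr ⟨by linarith only [hc], hK0⟩)
    linarith only [hNk, hNKlow, hα]
  obtain ⟨N₁, hN₁⟩ : ∃ x : ℤ, 6*(m*m+1) - (4*j' - 4*m*i' + 4*j*m + 4*i) = 4 * x :=
    ⟨6*m₀*m₀ + 6*m₀ + 3 - j' + m*i' - j*m - i, by linear_combination (6*m + 12*m₀ + 6) * hm₀⟩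
  have hN₁1 : 1 ≤ N₁ := by
    have h' := hN1
    rw [hN₁] at h'
    omega
  have hN4 : 4 ≤ 6*(m*m+1) - (4*j' - 4*m*i' + 4*j*m + 4*i) := by
    rw [hN₁]; omega
  have key1B : (6*(m*m+1) - (4*j' - 4*m*i' + 4*j*m + 4*i)) * K
      ≤ 4*K + (2*i' - 2*j + 3*m - 3) := by linarith only [hNK, hthB2]
  have key2B : 6*m*m - 6*m + 8 - (6*(m*m+1) - (4*j' - 4*m*i' + 4*j*m + 4*i))
      ≤ 4*(j*m) - 4*(m*i') := by linarith only [hjm', hi2]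
  have hfin1B : (4*m) * ((6*(m*m+1) - (4*j' - 4*m*i' + 4*j*m + 4*i)) * K)
      ≤ (4*m) * (4*K + (2*i' - 2*j + 3*m - 3)) :=
    mul_le_mul_of_nonneg_left key1B (by linarith only [hm])
  have hfin2B : 0 ≤ ((6*(m*m+1) - (4*j' - 4*m*i' + 4*j*m + 4*i)) - 4) * ((4*m)*K - 2) :=
    mul_nonneg (by linarith only [hN4]) (by linarith only [hP2, hm])
  nlinarith only [hfin1B, hfin2B, key2B]

set_option maxHeartbeats 1000000 in
/-- Lemma 3.12, Case IV `q = 2ak+2a−m`: `T₁ ∩ (−q·T₁) = ∅`. -/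
theorem T1_inter_neg_q_T1_empty_case_IV
    (m a k q n s α : ℕ)
    (hm1 : 1 ≤ m) (hmodd : Odd m)
    (ha : a = m ^ 2 + 1)
    (hk : 1 ≤ k)
    (hq : q + m = 2 * a * k + 2 * a)
    (hqodd : Odd q) (hqpp : IsPrimePow q)
    (hn : n = (q ^ 2 + 1) / a)
    (hs : s = (n - 1) / 2)
    (hα1 : 1 ≤ α) (hαk : α ≤ k)
    (T₁ : Set (ZMod n))
    (hT₁ : T₁ = {x : ZMod n | ∃ t h v u : ℤ,
      Odd t ∧ -(m : ℤ) ≤ t ∧ t ≤ (2 * (m : ℤ) - 1) * (m : ℤ) ∧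
      ((-(m : ℤ) ≤ t ∧ t ≤ -1 ∧ h = 2) ∨
        (∃ j : ℤ, 1 ≤ j ∧ j ≤ (m : ℤ) ∧
          (2 * j - 2) * (m : ℤ) + 1 ≤ t ∧
          t ≤ min (2 * j * (m : ℤ) - 1) ((2 * (m : ℤ) - 1) * (m : ℤ)) ∧
          h = 2 - j)) ∧
      ((s : ℤ) + ((m : ℤ) + t) * ((k : ℤ) + 1) + h + (α : ℤ) ≤ v) ∧
      (v ≤ (s : ℤ) + ((m : ℤ) + t + 2) * ((k : ℤ) + 1) + (h - 3) - (α : ℤ)) ∧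
      (0 ≤ u) ∧
      (if v ≤ (s : ℤ) + (2 * (a : ℤ) - (m : ℤ)) * (k : ℤ) + 2 * ((a : ℤ) - (m : ℤ))
        then u ≤ (α : ℤ) else u ≤ (α : ℤ) - 1) ∧
      (x = ((u * (q : ℤ) + v : ℤ) : ZMod n) ∨ x = -((u * (q : ℤ) + v : ℤ) : ZMod n))}) :
    T₁ ∩ ((fun x : ZMod n => -(q : ZMod n) * x) '' T₁) = ∅ := by
  obtain ⟨mo, hmo⟩ := hmodd
  -- basic arithmetic facts, cast to ℤ
  have haz : (a : ℤ) = (m : ℤ) * (m : ℤ) + 1 := by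
    rw [ha]; push_cast; ring
  have hqc : (q : ℤ) + (m : ℤ) = 2 * (a : ℤ) * (k : ℤ) + 2 * (a : ℤ) := by exact_mod_cast hq
  have hqz : (q : ℤ) = 2 * ((m : ℤ) * (m : ℤ) + 1) * ((k : ℤ) + 1) - (m : ℤ) := by
    linear_combination hqc + (2 * (k : ℤ) + 2) * haz
  have hma : m ≤ a := by rw [ha]; nlinarith
  have hle : 4 * m * (k + 1) ≤ 4 * a * (k + 1) * (k + 1) := by
    calc 4 * m * (k + 1) ≤ 4 * a * (k + 1) := Nat.mul_le_mul_right (k + 1) (by omega)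
      _ ≤ 4 * a * (k + 1) * (k + 1) := Nat.le_mul_of_pos_right _ (Nat.succ_pos k)
  have ha0 : 0 < a := by rw [ha]; exact Nat.succ_pos _
  have hnn : n = 4 * a * (k + 1) * (k + 1) - 4 * m * (k + 1) + 1 := by
    rw [hn]
    have h2 : q ^ 2 + 1 = a * (4 * a * (k + 1) * (k + 1) - 4 * m * (k + 1) + 1) := by
      zify [hle]
      rw [hqz, haz]; ring
    rw [h2, Nat.mul_div_cancel_left _ ha0]
  have hnzm : (n : ℤ) = 4 * ((m : ℤ) * (m : ℤ) + 1) * ((k : ℤ) + 1) * ((k : ℤ) + 1)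
      - 4 * (m : ℤ) * ((k : ℤ) + 1) + 1 := by
    rw [hnn]
    push_cast [hle]
    linear_combination (4 * ((k : ℤ) + 1) * ((k : ℤ) + 1)) * haz
  have hle2 : 2 * m * (k + 1) ≤ 2 * a * (k + 1) * (k + 1) := by
    calc 2 * m * (k + 1) ≤ 2 * a * (k + 1) := Nat.mul_le_mul_right (k + 1) (by omega)
      _ ≤ 2 * a * (k + 1) * (k + 1) := Nat.le_mul_of_pos_right _ (Nat.succ_pos k)
  have hnn2 : n = 2 * (2 * a * (k + 1) * (k + 1) - 2 * m * (k + 1)) + 1 := by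
    zify [hle2]
    linear_combination hnzm - (4 * ((k : ℤ) + 1) * ((k : ℤ) + 1)) * haz
  have hsz : 2 * (s : ℤ) + 1 = (n : ℤ) := by
    have h2s : 2 * s + 1 = n := by
      rw [hs]
      set X := 2 * a * (k + 1) * (k + 1) - 2 * m * (k + 1) with hX
      clear_value X
      omega
    exact_mod_cast h2s
  have hq2 : ((q : ℤ)) ^ 2 + 1 = (a : ℤ) * (n : ℤ) := by
    rw [hqz, haz, hnzm]; ring
  have hnne : NeZero n := ⟨by rw [hnn2]; exact Nat.succ_ne_zero _⟩
  -- main argument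
  rw [Set.eq_empty_iff_forall_notMem]
  rintro x ⟨hx1, hx2⟩
  obtain ⟨y, hy1, hyx⟩ := hx2
  rw [hT₁] at hx1 hy1
  simp only [Set.mem_setOf_eq] at hx1 hy1
  obtain ⟨t, h, v, u, htodd, ht1, ht2, hh, hv1, hv2, hu0, hui, hx⟩ := hx1
  obtain ⟨t', h', v', u', htodd', ht1', ht2', hh', hv1', hv2', hu0', hui', hy⟩ := hy1
  have huα : u ≤ (α : ℤ) := by
    by_cases hc : v ≤ (s : ℤ) + (2 * (a : ℤ) - (m : ℤ)) * (k : ℤ) + 2 * ((a : ℤ) - (m : ℤ))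
    · rw [if_pos hc] at hui; exact hui
    · rw [if_neg hc] at hui; linarith
  have huα' : u' ≤ (α : ℤ) := by
    by_cases hc : v' ≤ (s : ℤ) + (2 * (a : ℤ) - (m : ℤ)) * (k : ℤ) + 2 * ((a : ℤ) - (m : ℤ))
    · rw [if_pos hc] at hui'; exact hui'
    · rw [if_neg hc] at hui'; linarith
  have hyx2 : -(q : ZMod n) * y = x := hyx
  -- extract an integer divisibility
  have key : ((n : ℤ) ∣ (u * (q : ℤ) + v) + (v' * (q : ℤ) - u')) ∨
      ((n : ℤ) ∣ (u * (q : ℤ) + v) - (v' * (q : ℤ) - u')) := by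
    rcases hx with hx | hx <;> rcases hy with hy | hy
    · left
      rw [hx, hy] at hyx2
      have hzero : (((u * (q : ℤ) + v) + (q : ℤ) * (u' * (q : ℤ) + v') : ℤ) : ZMod n) = 0 := by
        push_cast
        push_cast at hyx2
        linear_combination -hyx2
      have hdvd0 := (ZMod.intCast_zmod_eq_zero_iff_dvd _ n).mp hzero
      have heq : (u * (q : ℤ) + v) + (v' * (q : ℤ) - u')
          = ((u * (q : ℤ) + v) + (q : ℤ) * (u' * (q : ℤ) + v')) - u' * ((a : ℤ) * n) := by
        linear_combination (-(u' : ℤ)) * hq2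
      rw [heq]
      exact dvd_sub hdvd0 ⟨u' * a, by ring⟩
    · right
      rw [hx, hy] at hyx2
      have hzero : (((u * (q : ℤ) + v) - (q : ℤ) * (u' * (q : ℤ) + v') : ℤ) : ZMod n) = 0 := by
        push_cast
        push_cast at hyx2
        linear_combination -hyx2
      have hdvd0 := (ZMod.intCast_zmod_eq_zero_iff_dvd _ n).mp hzero
      have heq : (u * (q : ℤ) + v) - (v' * (q : ℤ) - u')
          = ((u * (q : ℤ) + v) - (q : ℤ) * (u' * (q : ℤ) + v')) + u' * ((a : ℤ) * n) := by
        linear_combination ((u' : ℤ)) * hq2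
      rw [heq]
      exact dvd_add hdvd0 ⟨u' * a, by ring⟩
    · right
      rw [hx, hy] at hyx2
      have hzero : (((u * (q : ℤ) + v) - (q : ℤ) * (u' * (q : ℤ) + v') : ℤ) : ZMod n) = 0 := by
        push_cast
        push_cast at hyx2
        linear_combination hyx2
      have hdvd0 := (ZMod.intCast_zmod_eq_zero_iff_dvd _ n).mp hzero
      have heq : (u * (q : ℤ) + v) - (v' * (q : ℤ) - u')
          = ((u * (q : ℤ) + v) - (q : ℤ) * (u' * (q : ℤ) + v')) + u' * ((a : ℤ) * n) := by
        linear_combination ((u' : ℤ)) * hq2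
      rw [heq]
      exact dvd_add hdvd0 ⟨u' * a, by ring⟩
    · left
      rw [hx, hy] at hyx2
      have hzero : (((u * (q : ℤ) + v) + (q : ℤ) * (u' * (q : ℤ) + v') : ℤ) : ZMod n) = 0 := by
        push_cast
        push_cast at hyx2
        linear_combination hyx2
      have hdvd0 := (ZMod.intCast_zmod_eq_zero_iff_dvd _ n).mp hzero
      have heq : (u * (q : ℤ) + v) + (v' * (q : ℤ) - u')
          = ((u * (q : ℤ) + v) + (q : ℤ) * (u' * (q : ℤ) + v')) - u' * ((a : ℤ) * n) := by
        linear_combination (-(u' : ℤ)) * hq2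
      rw [heq]
      exact dvd_sub hdvd0 ⟨u' * a, by ring⟩
  -- convert the two parameter tuples
  have hmz : (1 : ℤ) ≤ (m : ℤ) := by exact_mod_cast hm1
  have hmoddz : Odd ((m : ℤ)) := ⟨(mo : ℤ), by exact_mod_cast hmo⟩
  obtain ⟨j, i, hj0, hjm, hi1, hi2, hO1, hO2⟩ :=
    convert_elt (m : ℤ) ((k : ℤ) + 1) (s : ℤ) (α : ℤ) t h v hmz hmoddz htodd hh hv1 hv2
  obtain ⟨j', i', hj0', hjm', hi1', hi2', hO1', hO2'⟩ :=
    convert_elt (m : ℤ) ((k : ℤ) + 1) (s : ℤ) (α : ℤ) t' h' v' hmz hmoddz htodd' hh' hv1' hv2'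
  have hKz : (2 : ℤ) ≤ (k : ℤ) + 1 := by
    have : (1 : ℤ) ≤ (k : ℤ) := by exact_mod_cast hk
    linarith
  have hαz : (1 : ℤ) ≤ (α : ℤ) := by exact_mod_cast hα1
  have hm₀z : (m : ℤ) = 2 * (mo : ℤ) + 1 := by exact_mod_cast hmo
  rcases key with hkey | hkey
  · refine coreA (m : ℤ) ((k : ℤ) + 1) (α : ℤ) (s : ℤ) (q : ℤ) (n : ℤ) (mo : ℤ)
      hmz hm₀z hKz hαz hqz hnzm hsz
      j i (v - (s : ℤ) - 2 * (j * (m : ℤ) + i) * ((k : ℤ) + 1)) u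
      j' i' (v' - (s : ℤ) - 2 * (j' * (m : ℤ) + i') * ((k : ℤ) + 1)) u'
      hj0 hjm hi1 hi2 hO1 hO2 hu0 huα
      hj0' hjm' hi1' hi2' hO1' hO2' hu0' huα' ?_
    have heq : (u * (q : ℤ) + ((s : ℤ) + 2 * (j * (m : ℤ) + i) * ((k : ℤ) + 1)
          + (v - (s : ℤ) - 2 * (j * (m : ℤ) + i) * ((k : ℤ) + 1))))
        + (((s : ℤ) + 2 * (j' * (m : ℤ) + i') * ((k : ℤ) + 1)
          + (v' - (s : ℤ) - 2 * (j' * (m : ℤ) + i') * ((k : ℤ) + 1))) * (q : ℤ) - u')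
        = (u * (q : ℤ) + v) + (v' * (q : ℤ) - u') := by ring
    rw [heq]
    exact hkey
  · refine coreB (m : ℤ) ((k : ℤ) + 1) (α : ℤ) (s : ℤ) (q : ℤ) (n : ℤ) (mo : ℤ)
      hmz hm₀z hKz hαz hqz hnzm hsz
      j i (v - (s : ℤ) - 2 * (j * (m : ℤ) + i) * ((k : ℤ) + 1)) u
      j' i' (v' - (s : ℤ) - 2 * (j' * (m : ℤ) + i') * ((k : ℤ) + 1)) u'
      hj0 hjm hi1 hi2 hO1 hO2 hu0 huα
      hj0' hjm' hi1' hi2' hO1' hO2' hu0' huα' ?_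
    have heq : (u * (q : ℤ) + ((s : ℤ) + 2 * (j * (m : ℤ) + i) * ((k : ℤ) + 1)
          + (v - (s : ℤ) - 2 * (j * (m : ℤ) + i) * ((k : ℤ) + 1))))
        - (((s : ℤ) + 2 * (j' * (m : ℤ) + i') * ((k : ℤ) + 1)
          + (v' - (s : ℤ) - 2 * (j' * (m : ℤ) + i') * ((k : ℤ) + 1))) * (q : ℤ) - u')
        = (u * (q : ℤ) + v) - (v' * (q : ℤ) - u') := by ring
    rw [heq]
    exact hkey
end

section
/- (BCH bound for cyclic codes.) Let F be a finite field, n a positive integer coprime to the characteristic of F, E an extension field of F containing a primitive n-th root of unity λ, and Z a subset of {0, 1, ..., n−1}. Let C = {(c₀, ..., c_{n−1}) ∈ Fⁿ : Σ_{j=0}^{n−1} c_j λ^{ij} = 0 for all i ∈ Z} be the cyclic code with defining set Z. If Z contains d−1 consecutive integers {b, b+1, ..., b+d−2} (for some integer b and some d ≥ 2), then every nonzero codeword of C has Hamming weight at least d. -/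
/-- BCH bound for cyclic codes: if the defining set `Z ⊆ {0,…,n−1}` of the
cyclic code `C = {c ∈ Fⁿ : ∑ⱼ cⱼ λ^{ij} = 0 for all i ∈ Z}` contains `d−1` consecutive
integers `{b, b+1, …, b+d−2}` (with `d ≥ 2`), then every nonzero codeword of `C` has
Hamming weight at least `d`. -/
theorem bch_bound_for_cyclic_codes
    (F : Type*) [Field F] [Fintype F] [DecidableEq F]
    (E : Type*) [Field E] [Algebra F E]
    (n : ℕ) (hn : 0 < n) (hcop : Nat.Coprime n (ringChar F))
    (lam : E) (hlam : IsPrimitiveRoot lam n)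
    (Z : Set ℕ) (hZn : ∀ i ∈ Z, i < n)
    (C : Set (Fin n → F))
    (hC : C = {c : Fin n → F | ∀ i ∈ Z,
      ∑ j : Fin n, algebraMap F E (c j) * lam ^ (i * (j : ℕ)) = 0})
    (b d : ℕ) (hd : 2 ≤ d)
    (hconsec : ∀ x : ℕ, b ≤ x → x ≤ b + d - 2 → x ∈ Z) :
    ∀ c ∈ C, c ≠ 0 → d ≤ hammingNorm c := by
  intro c hc hc0
  by_contra hlt
  push_neg at hlt
  subst hC
  -- support of c
  set S : Finset (Fin n) := {i | c i ≠ 0} with hS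
  set w : ℕ := hammingNorm c with hw
  have hcard : S.card = w := rfl
  have hwd : w ≤ d - 1 := by omega
  have hwpos : 0 < w := by
    rcases Function.ne_iff.mp hc0 with ⟨i, hi⟩
    have hi' : c i ≠ 0 := by simpa using hi
    have : i ∈ S := by simp [hS, hi']
    have := Finset.card_pos.mpr ⟨i, this⟩
    omega
  -- enumeration of support
  let e : Fin w ≃ {x // x ∈ S} := (S.equivFin.trans (finCongr hcard)).symm
  let J : Fin w → Fin n := fun l => (e l : Fin n)
  have hJinj : Function.Injective J := fun l m h => by
    apply e.injective; exact Subtype.ext h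
  have hcJ : ∀ l, c (J l) ≠ 0 := fun l => by
    have h2 := (e l).2
    exact (Finset.mem_filter.mp h2).2
  have hlamne : lam ≠ 0 := hlam.ne_zero (by omega)
  -- the Vandermonde-type data
  let u : Fin w → E := fun l => lam ^ (J l : ℕ)
  have huinj : Function.Injective u := by
    intro l m h
    apply hJinj
    exact Fin.ext (hlam.pow_inj (J l).2 (J m).2 h)
  let D : Fin w → E := fun l => lam ^ (b * (J l : ℕ))
  let M : Matrix (Fin w) (Fin w) E :=
    Matrix.diagonal D * Matrix.vandermonde u
  have hdet : M.det ≠ 0 := by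
    rw [Matrix.det_mul, Matrix.det_diagonal]
    refine mul_ne_zero (Finset.prod_ne_zero_iff.mpr fun l _ => pow_ne_zero _ hlamne) ?_
    exact Matrix.det_vandermonde_ne_zero_iff.mpr huinj
  let v : Fin w → E := fun l => algebraMap F E (c (J l))
  -- the syndrome equations give M.transpose.mulVec v = 0
  have hsyn : M.transpose.mulVec v = 0 := by
    funext k
    have hbk : (b + (k : ℕ)) ∈ Z := by
      apply hconsec _ (Nat.le_add_right _ _)
      have := k.2
      omega
    have h0 := hc _ hbk
    have hsub : ∑ j ∈ S, algebraMap F E (c j) * lam ^ ((b + (k : ℕ)) * (j : ℕ)) = 0 := by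
      rw [← h0]
      apply Finset.sum_subset (Finset.subset_univ _)
      intro j _ hj
      have : c j = 0 := by simpa [hS] using hj
      simp [this]
    have hre : ∑ l : Fin w, algebraMap F E (c (J l)) * lam ^ ((b + (k : ℕ)) * (J l : ℕ)) = 0 := by
      have h1 : ∑ x : {x // x ∈ S}, algebraMap F E (c (x : Fin n)) *
          lam ^ ((b + (k : ℕ)) * ((x : Fin n) : ℕ)) = 0 := by
        rw [Finset.sum_coe_sort S
          (fun j => algebraMap F E (c j) * lam ^ ((b + (k : ℕ)) * (j : ℕ)))]
        exact hsub
      rw [← h1]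
      exact Equiv.sum_comp e
        (fun x : {x // x ∈ S} => algebraMap F E (c (x : Fin n)) *
          lam ^ ((b + (k : ℕ)) * ((x : Fin n) : ℕ)))
    have : M.transpose.mulVec v k = ∑ l : Fin w, algebraMap F E (c (J l)) * lam ^ ((b + (k : ℕ)) * (J l : ℕ)) := by
      simp only [Matrix.mulVec, dotProduct, Matrix.transpose_apply, M,
        Matrix.mul_apply, Matrix.diagonal_apply, Matrix.vandermonde]
      refine Finset.sum_congr rfl fun l _ => ?_
      rw [Finset.sum_eq_single l]
      · simp only [if_true, Matrix.of_apply, D, u, v]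
        rw [← pow_mul, ← pow_add]
        have hx : b * (J l : ℕ) + (J l : ℕ) * (k : ℕ) = (b + (k : ℕ)) * (J l : ℕ) := by ring
        rw [hx, mul_comm]
      · intro m _ hm; simp [Ne.symm hm]
      · intro h; exact absurd (Finset.mem_univ l) h
    rw [this, hre]; rfl
  have hv0 : v = 0 := Matrix.eq_zero_of_mulVec_eq_zero (by rwa [Matrix.det_transpose]) hsyn
  have hl : v ⟨0, hwpos⟩ = 0 := by rw [hv0]; rfl
  exact hcJ _ ((map_eq_zero _).mp hl)
end

section
/- Let m ≥ 1 be an odd integer, a = m²+1, k ≥ 1 an integer, and q = 2ak+m an odd prime power; set n = (q²+1)/a and s = (n−1)/2. Fix an integer α with 1 ≤ α ≤ k, set δ = αq+mk, and let Z = C_{s+1} ∪ C_{s+2} ∪ ... ∪ C_{s+δ} ⊆ Z/nZ. Let λ be a primitive n-th root of unity in an extension field of F_{q²} (such λ exists in F_{q⁴} since n divides q⁴−1), and let C = {(c₀, ..., c_{n−1}) ∈ (F_{q²})ⁿ : Σ_{j=0}^{n−1} c_j λ^{ij} = 0 for all i ∈ Z}. Then C is an MDS code with parameters [n, n−2δ,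 2δ+1]: its dimension over F_{q²} is n−2δ and its minimum Hamming distance is exactly 2δ+1. -/
/-!
Since `a * n = q ^ 2 + 1`, we have `q ^ 2 ≡ -1 (mod n)`, so the defining set `Z = -Z` is stable
under multiplication by `q ^ 2 = #F`. Hence `∏ z ∈ Z, (X - λ ^ z)` is fixed by the Frobenius of
`F` and descends to a monic `G ∈ F[X]` of degree `#Z = 2δ`, and `C` is the space of words whose
polynomial `∑ c j X ^ j` is a multiple of `G`, of dimension `n - 2δ`. As `Z` consists of the
residues of the `2δ` consecutive integers `s - δ + 1, …, s + δ < n`, a Vandermonde determinant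
(the BCH bound) shows that nonzero codewords have weight `> 2δ`, while the coefficient vector of
`G` has weight `≤ 2δ + 1`.
-/

open Polynomial Finset

theorem FiniteField.mem_range_algebraMap_of_pow_card_eq_self {K L : Type*} [Field K] [Fintype K]
    [Field L] [Algebra K L] {x : L} (hx : x ^ Fintype.card K = x) :
    x ∈ Set.range (algebraMap K L) := by
  classical
  have hroots := FiniteField.roots_X_pow_card_sub_X K
  have hmap := roots_map_of_injective_of_card_eq_natDegree (algebraMap K L).injective
    (p := X ^ Fintype.card K - X) (by
      rw [hroots, X_pow_card_sub_X_natDegree_eq K Fintype.one_lt_card]; rfl)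
  have hx_root : x ∈ (map (algebraMap K L) (X ^ Fintype.card K - X)).roots := by
    rw [mem_roots (map_ne_zero (X_pow_card_sub_X_ne_zero K Fintype.one_lt_card))]
    simp [hx]
  rw [← hmap, hroots] at hx_root
  obtain ⟨a, -, rfl⟩ := Multiset.mem_map.1 hx_root
  exact ⟨a, rfl⟩

theorem FiniteField.prod_X_sub_C_mem_lifts {K L : Type*} [Field K] [Fintype K] [Field L]
    [Algebra K L] {T : Finset L} (hT : ∀ x ∈ T, x ^ Fintype.card K ∈ T) :
    (∏ x ∈ T, (X - C x)) ∈ lifts (algebraMap K L) := by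
  classical
  set φ : L →+* L := (frobeniusAlgHom K L).toRingHom
  have hφT : T.image φ = T :=
    eq_of_subset_of_card_le (image_subset_iff.2 hT) (card_image_of_injective _ φ.injective).ge
  have hfix : (∏ x ∈ T, (X - C x)).map φ = ∏ x ∈ T, (X - C x) := by
    conv_rhs => rw [← hφT, prod_image fun x _ y _ h => φ.injective h]
    simp [Polynomial.map_prod]
  refine (lifts_iff_coeff_lifts _).2 fun j => mem_range_algebraMap_of_pow_card_eq_self ?_
  simpa [φ] using congrArg (coeff · j) hfix

theorem IsPrimitiveRoot.pow_val_mul_natCast {M : Type*} [CommMonoid M] {β : M} {n : ℕ} [NeZero n]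
    (hβ : IsPrimitiveRoot β n) (z : ZMod n) (k : ℕ) :
    β ^ (z * k).val = (β ^ z.val) ^ k := by
  rw [← pow_mul, (hβ.isOfFinOrder (NeZero.ne n)).pow_eq_pow_iff_modEq, ← hβ.eq_orderOf,
    ← ZMod.natCast_eq_natCast_iff]
  push_cast
  simp

theorem Finset.prod_X_sub_C_dvd_iff {R : Type*} [CommRing R] [IsDomain R]
    (s : Finset R) (p : R[X]) : ∏ x ∈ s, (X - C x) ∣ p ↔ ∀ x ∈ s, p.IsRoot x := by
  classical
  rcases eq_or_ne p 0 with rfl | hp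
  · simp
  rw [prod_eq_multiset_prod, Multiset.prod_X_sub_C_dvd_iff_le_roots hp,
    Multiset.le_iff_subset s.nodup]
  simp [Multiset.subset_iff, mem_roots hp]

theorem IsPrimitiveRoot.exists_monic_dvd_iff_forall_aeval_eq_zero {K L : Type*} [Field K]
    [Fintype K] [Field L] [Algebra K L] {n : ℕ} [NeZero n] {β : L} (hβ : IsPrimitiveRoot β n)
    {Z : Finset (ZMod n)} (hZ : ∀ z ∈ Z, z * Fintype.card K ∈ Z) :
    ∃ g : K[X], g.Monic ∧ g.natDegree = #Z ∧
      ∀ p : K[X], g ∣ p ↔ ∀ z ∈ Z, aeval (β ^ z.val) p = 0 := by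
  classical
  have hinj : Set.InjOn (fun z : ZMod n => β ^ z.val) Z := fun z _ z' _ h =>
    ZMod.val_injective n (hβ.pow_inj (ZMod.val_lt z) (ZMod.val_lt z') h)
  have hT : ∀ x ∈ Z.image (β ^ ·.val), x ^ Fintype.card K ∈ Z.image (β ^ ·.val) := by
    simp only [mem_image, forall_exists_index, and_imp, forall_apply_eq_imp_iff₂]
    exact fun z hz => ⟨_, hZ z hz, hβ.pow_val_mul_natCast z _⟩
  obtain ⟨g, hg⟩ := (mem_lifts _).1 (FiniteField.prod_X_sub_C_mem_lifts hT)
  have hmonic : (g.map (algebraMap K L)).Monic :=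
    hg ▸ monic_prod_of_monic _ _ fun _ _ => monic_X_sub_C _
  refine ⟨g, monic_of_injective (algebraMap K L).injective hmonic, ?_, fun p => ?_⟩
  · rw [← natDegree_map_eq_of_injective (algebraMap K L).injective, hg,
      natDegree_prod_of_monic _ _ fun _ _ => monic_X_sub_C _]
    simp [card_image_of_injOn hinj]
  · rw [← map_dvd_map' (algebraMap K L), hg, prod_X_sub_C_dvd_iff]
    simp [aeval_def, eval_map]

namespace Polynomial

theorem ofFn_toFn_of_degree_lt {R : Type*} [Semiring R] [DecidableEq R] {n : ℕ} {p : R[X]}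
    (hp : p.degree < n) : ofFn n (toFn n p) = p := by
  ext i
  by_cases hi : i < n
  · simp [hi, toFn]
  · rw [ofFn_coeff_eq_zero_of_ge _ (not_lt.1 hi), coeff_eq_zero_of_degree_lt]
    exact hp.trans_le (by exact_mod_cast not_lt.1 hi)

theorem aeval_ofFn {R A : Type*} [CommSemiring R] [DecidableEq R] [Semiring A] [Algebra R A]
    {n : ℕ} (v : Fin n → R) (x : A) :
    aeval x (ofFn n v) = ∑ i, algebraMap R A (v i) * x ^ (i : ℕ) := by
  simp [ofFn_eq_sum_monomial, aeval_monomial]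

theorem hammingNorm_toFn_le {R : Type*} [Semiring R] [DecidableEq R] (n : ℕ) (p : R[X]) :
    hammingNorm (toFn n p) ≤ p.natDegree + 1 := by
  calc hammingNorm (toFn n p) ≤ #p.support :=
        card_le_card_of_injOn (fun i => (i : ℕ))
          (fun i hi => by simpa [toFn] using (mem_filter.1 hi).2) fun i _ j _ h => Fin.ext h
    _ ≤ p.natDegree + 1 := card_supp_le_succ_natDegree p

theorem degree_mul_lt_of_mem_degreeLT {R : Type*} [Semiring R] [NoZeroDivisors R] {n : ℕ}
    {g h : R[X]} (hgn : g.natDegree ≤ n) (hh : h ∈ degreeLT R (n - g.natDegree)) :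
    (g * h).degree < n := by
  rcases eq_or_ne h 0 with rfl | h0
  · simp
  rcases eq_or_ne g 0 with rfl | g0
  · simp
  have := (natDegree_lt_iff_degree_lt h0).2 (mem_degreeLT.1 hh)
  rw [degree_mul, degree_eq_natDegree g0, degree_eq_natDegree h0]
  exact_mod_cast (by omega : g.natDegree + h.natDegree < n)

variable {K : Type*} [Field K] [DecidableEq K]

noncomputable def multiplesCode (n : ℕ) (g : K[X]) : Submodule K (Fin n → K) :=
  ((Ideal.span {g}).restrictScalars K).comap (ofFn n)

theorem mem_multiplesCode {n : ℕ} {g : K[X]} {c : Fin n → K} :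
    c ∈ multiplesCode n g ↔ g ∣ ofFn n c := by
  simp [multiplesCode, Ideal.mem_span_singleton]

theorem toFn_mem_multiplesCode {n : ℕ} {g : K[X]} (hg : g.degree < n) :
    toFn n g ∈ multiplesCode n g := by
  rw [mem_multiplesCode, ofFn_toFn_of_degree_lt hg]

theorem finrank_multiplesCode {n : ℕ} {g : K[X]} (hg : g ≠ 0) (hgn : g.natDegree ≤ n) :
    Module.finrank K (multiplesCode n g) = n - g.natDegree := by
  set μ : degreeLT K (n - g.natDegree) →ₗ[K] Fin n → K :=
    (toFn n).comp ((LinearMap.mulLeft K g).comp (degreeLT K _).subtype)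
  have hμ : ∀ h : degreeLT K (n - g.natDegree), ofFn n (μ h) = g * h := fun h =>
    ofFn_toFn_of_degree_lt (degree_mul_lt_of_mem_degreeLT hgn h.2)
  have hinj : Function.Injective μ := fun h₁ h₂ h => by
    have := congrArg (ofFn n) h
    rw [hμ, hμ] at this
    exact Subtype.ext (mul_left_cancel₀ hg this)
  have hrange : LinearMap.range μ = multiplesCode n g := by
    ext c
    constructor
    · rintro ⟨h, rfl⟩
      rw [mem_multiplesCode, hμ]
      exact dvd_mul_right _ _
    · intro hc
      obtain ⟨h, hh⟩ := mem_multiplesCode.1 hc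
      refine ⟨⟨h, mem_degreeLT.2 ?_⟩, ?_⟩
      · rcases eq_or_ne h 0 with rfl | h0
        · simp
        have hdeg := (natDegree_lt_iff_degree_lt (mul_ne_zero hg h0)).2 (hh ▸ ofFn_degree_lt c)
        rw [natDegree_mul hg h0] at hdeg
        rw [degree_eq_natDegree h0]
        exact_mod_cast (by omega : h.natDegree < n - g.natDegree)
      · simp [μ, ← hh, toFn_comp_ofFn_eq_id]
  rw [← hrange, LinearMap.finrank_range_of_inj hinj, (degreeLTEquiv K _).finrank_eq,
    Module.finrank_fin_fun]

end Polynomial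

theorem Finset.eq_zero_of_forall_sum_mul_pow_eq_zero {R ι : Type*} [CommRing R] [IsDomain R]
    {s : Finset ι} {f v : ι → R} (hf : Set.InjOn f s)
    (h : ∀ t < #s, ∑ i ∈ s, v i * f i ^ t = 0) : ∀ i ∈ s, v i = 0 := by
  set e := s.equivFin
  have hzero : (fun r => v (e.symm r)) = 0 := by
    refine Matrix.eq_zero_of_forall_pow_sum_mul_pow_eq_zero
      (f := fun r => f (e.symm r)) (fun r r' hr => e.symm.injective (Subtype.ext ?_)) fun t => ?_
    · exact hf (e.symm r).2 (e.symm r').2 hr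
    · rw [← h t t.2, ← s.sum_coe_sort, ← e.symm.sum_comp]
  intro i hi
  simpa using congrFun hzero (e ⟨i, hi⟩)

theorem IsPrimitiveRoot.lt_hammingNorm_of_aeval_pow_add_eq_zero {K L : Type*} [Field K]
    [DecidableEq K] [Field L] [Algebra K L] {n b w : ℕ} {β : L} (hβ : IsPrimitiveRoot β n)
    {c : Fin n → K} (hc : c ≠ 0)
    (h : ∀ t < w, aeval (β ^ (b + t)) (ofFn n c) = 0) :
    w < hammingNorm c := by
  obtain ⟨j₀, hj₀⟩ : ∃ j, c j ≠ 0 := Function.ne_iff.1 hc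
  have hn : n ≠ 0 := j₀.pos.ne'
  set S : Finset (Fin n) := {j | c j ≠ 0}
  by_contra! hw
  have hvanish := eq_zero_of_forall_sum_mul_pow_eq_zero (s := S) (f := fun j => β ^ (j : ℕ))
    (v := fun j => algebraMap K L (c j) * β ^ (b * j))
    (fun j _ j' _ hj => Fin.ext (hβ.pow_inj j.2 j'.2 hj)) fun t ht => by
      rw [← h t (ht.trans_le hw), aeval_ofFn]
      refine sum_subset (subset_univ S) (fun j _ hj => ?_) |>.trans (sum_congr rfl fun j _ => ?_)
      · rw [show c j = 0 by simpa [S] using hj]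
        simp
      · ring
  have hvj₀ := hvanish j₀ (by simpa [S] using hj₀)
  exact hj₀ (by simpa [hβ.ne_zero hn] using hvj₀)

theorem caseI_parameters {m a k q n s α δ : ℕ} (ha : a = m ^ 2 + 1) (hq : q = 2 * a * k + m)
    (hn : n = (q ^ 2 + 1) / a) (hs : s = (n - 1) / 2) (hαk : α ≤ k)
    (hδ : δ = α * q + m * k) :
    ((q ^ 2 : ℕ) : ZMod n) = -1 ∧ n = 2 * s + 1 ∧ δ ≤ s := by
  have hqa : q ^ 2 + 1 = a * (2 * (k * q + m * k) + 1) := by subst hq ha; ring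
  have hn' : n = 2 * (k * q + m * k) + 1 := by
    rw [hn, hqa, Nat.mul_div_cancel_left _ (by omega)]
  have hαq : α * q ≤ k * q := Nat.mul_le_mul_right q hαk
  refine ⟨?_, by omega, by omega⟩
  rw [eq_neg_iff_add_eq_zero]
  exact_mod_cast (ZMod.natCast_eq_zero_iff _ _).2 ⟨a, by rw [hqa, ← hn', mul_comm]⟩

theorem ZMod.natCast_eq_neg_natCast {n u v : ℕ} (h : u + v = n) :
    (u : ZMod n) = -(v : ZMod n) :=
  eq_neg_of_add_eq_zero_left (by rw [← Nat.cast_add, h, ZMod.natCast_self])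

theorem ZMod.setOf_symm_interval_eq {n s δ : ℕ} (hn : n = 2 * s + 1) (hδ : δ ≤ s) :
    {x : ZMod n | ∃ i : ℕ, 1 ≤ i ∧ i ≤ δ ∧
      (x = ((s + i : ℕ) : ZMod n) ∨ x = -((s + i : ℕ) : ZMod n))} =
      ((range (2 * δ)).image fun t => ((s + 1 - δ + t : ℕ) : ZMod n) : Set (ZMod n)) := by
  ext x
  simp only [Set.mem_ofPred_eq, coe_image, coe_range, Set.mem_image, Set.mem_Iio]
  constructor
  · rintro ⟨i, hi1, hiδ, rfl | rfl⟩
    · exact ⟨δ + i - 1, by omega, by congr 1; omega⟩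
    · exact ⟨δ - i, by omega, natCast_eq_neg_natCast (by omega)⟩
  · rintro ⟨t, ht, rfl⟩
    by_cases htδ : δ ≤ t
    · exact ⟨t + 1 - δ, by omega, by omega, .inl (by congr 1; omega)⟩
    · exact ⟨δ - t, by omega, by omega, .inr (natCast_eq_neg_natCast (by omega))⟩

theorem ZMod.card_image_range_natCast {n b w : ℕ} (h : b + w ≤ n) :
    #((range w).image fun t => ((b + t : ℕ) : ZMod n)) = w := by
  rw [card_image_of_injOn, card_range]
  intro t ht t' ht' htt
  simp only [coe_range, Set.mem_Iio] at ht ht'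
  have := congrArg ZMod.val htt
  rw [ZMod.val_natCast_of_lt (by omega : b + t < n),
    ZMod.val_natCast_of_lt (by omega : b + t' < n)] at this
  omega

theorem mds_cyclic_code_case_I_general
    (m a k q n s α δ : ℕ)
    (ha : a = m ^ 2 + 1)
    (hq : q = 2 * a * k + m)
    (hn : n = (q ^ 2 + 1) / a)
    (hs : s = (n - 1) / 2)
    (hαk : α ≤ k)
    (hδ : δ = α * q + m * k)
    (F : Type*) [Field F] [Fintype F] [DecidableEq F]
    (hF : Fintype.card F = q ^ 2)
    (E : Type*) [Field E] [Algebra F E]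
    (lam : E) (hlam : IsPrimitiveRoot lam n)
    (Z : Set (ZMod n))
    (hZ : Z = {x : ZMod n | ∃ i : ℕ, 1 ≤ i ∧ i ≤ δ ∧
      (x = ((s + i : ℕ) : ZMod n) ∨ x = -((s + i : ℕ) : ZMod n))})
    (C : Set (Fin n → F))
    (hC : C = {c : Fin n → F | ∀ i : ZMod n, i ∈ Z →
      ∑ j : Fin n, algebraMap F E (c j) * lam ^ (i.val * (j : ℕ)) = 0}) :
    (∃ W : Submodule F (Fin n → F), (W : Set (Fin n → F)) = C ∧
      Module.finrank F W = n - 2 * δ) ∧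
    (∀ c ∈ C, c ≠ 0 → 2 * δ + 1 ≤ hammingNorm c) ∧
    (∃ c ∈ C, c ≠ 0 ∧ hammingNorm c = 2 * δ + 1) := by
  obtain ⟨hq2, hns, hδs⟩ := caseI_parameters ha hq hn hs hαk hδ
  have : NeZero n := ⟨by omega⟩
  set T := (range (2 * δ)).image fun t => ((s + 1 - δ + t : ℕ) : ZMod n)
  have hTZ : (T : Set (ZMod n)) = Z := hZ ▸ (ZMod.setOf_symm_interval_eq hns hδs).symm
  have hTfrob : ∀ z ∈ T, z * (Fintype.card F : ℕ) ∈ T := by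
    simp only [hF, hq2, mul_neg_one, ← mem_coe, hTZ, hZ]
    rintro z ⟨i, hi1, hiδ, rfl | rfl⟩
    · exact ⟨i, hi1, hiδ, .inr rfl⟩
    · exact ⟨i, hi1, hiδ, .inl (neg_neg _)⟩
  obtain ⟨G, hGmonic, hGdeg, hG⟩ := hlam.exists_monic_dvd_iff_forall_aeval_eq_zero hTfrob
  rw [ZMod.card_image_range_natCast (by omega)] at hGdeg
  have hCG : C = multiplesCode n G := by
    ext c
    simp [hC, ← hTZ, mem_multiplesCode, hG, aeval_ofFn, pow_mul]
  have hmin : ∀ c ∈ C, c ≠ 0 → 2 * δ + 1 ≤ hammingNorm c := fun c hc hc0 =>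
    hlam.lt_hammingNorm_of_aeval_pow_add_eq_zero (b := s + 1 - δ) hc0 fun t ht => by
      rw [hCG, SetLike.mem_coe, mem_multiplesCode, hG] at hc
      have hroot := hc _ (mem_image_of_mem _ (mem_range.2 ht))
      rwa [ZMod.val_natCast_of_lt (by omega : s + 1 - δ + t < n)] at hroot
  have hGn : G.degree < n := by
    rw [degree_eq_natDegree hGmonic.ne_zero, hGdeg]
    exact_mod_cast (by omega : 2 * δ < n)
  refine ⟨⟨_, hCG.symm, hGdeg ▸ finrank_multiplesCode hGmonic.ne_zero (by omega)⟩,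
    hmin, ?_⟩
  have hGC : toFn n G ∈ C := hCG ▸ toFn_mem_multiplesCode hGn
  have hG0 : toFn n G ≠ 0 := fun h0 => hGmonic.ne_zero (by
    rw [← ofFn_toFn_of_degree_lt hGn, h0, map_zero])
  exact ⟨_, hGC, hG0, le_antisymm (hGdeg ▸ hammingNorm_toFn_le n G) (hmin _ hGC hG0)⟩

/-- Case I, q = 2ak+m: the cyclic code over F_{q²} of length n = (q²+1)/a with
defining set Z = C_{s+1} ∪ ⋯ ∪ C_{s+δ} is an MDS code with parameters
[n, n−2δ, 2δ+1]: it is an F-subspace of dimension n−2δ, every nonzero codeword has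
Hamming weight at least 2δ+1, and some nonzero codeword has Hamming weight exactly 2δ+1. -/
theorem mds_cyclic_code_case_I
    (m a k q n s α δ : ℕ)
    (hm1 : 1 ≤ m) (hmodd : Odd m)
    (ha : a = m ^ 2 + 1)
    (hk : 1 ≤ k)
    (hq : q = 2 * a * k + m)
    (hqodd : Odd q) (hqpp : IsPrimePow q)
    (hn : n = (q ^ 2 + 1) / a)
    (hs : s = (n - 1) / 2)
    (hα1 : 1 ≤ α) (hαk : α ≤ k)
    (hδ : δ = α * q + m * k)
    (F : Type*) [Field F] [Fintype F] [DecidableEq F]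
    (hF : Fintype.card F = q ^ 2)
    (E : Type*) [Field E] [Algebra F E]
    (lam : E) (hlam : IsPrimitiveRoot lam n)
    (Z : Set (ZMod n))
    (hZ : Z = {x : ZMod n | ∃ i : ℕ, 1 ≤ i ∧ i ≤ δ ∧
      (x = ((s + i : ℕ) : ZMod n) ∨ x = -((s + i : ℕ) : ZMod n))})
    (C : Set (Fin n → F))
    (hC : C = {c : Fin n → F | ∀ i : ZMod n, i ∈ Z →
      ∑ j : Fin n, algebraMap F E (c j) * lam ^ (i.val * (j : ℕ)) = 0}) :
    (∃ W : Submodule F (Fin n → F), (W : Set (Fin n → F)) = C ∧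
      Module.finrank F W = n - 2 * δ) ∧
    (∀ c ∈ C, c ≠ 0 → 2 * δ + 1 ≤ hammingNorm c) ∧
    (∃ c ∈ C, c ≠ 0 ∧ hammingNorm c = 2 * δ + 1) :=
  mds_cyclic_code_case_I_general m a k q n s α δ ha hq hn hs hαk hδ F hF E lam hlam Z hZ C hC
end

section
/- Let m ≥ 1 be an odd integer, a = m²+1, k ≥ 1 an integer, and q = 2ak+2a−m an odd prime power; set n = (q²+1)/a and s = (n−1)/2. Fix an integer α with 1 ≤ α ≤ k, set δ = αq+(2a−m)k+2(a−m), and let Z = C_{s+1} ∪ C_{s+2} ∪ ... ∪ C_{s+δ} ⊆ Z/nZ. Let λ be a primitive n-th root of unity in an extension field of F_{q²} (such λ exists in F_{q⁴} since n divides q⁴−1), and let C = {(c₀, ..., c_{n−1}) ∈ (F_{q²})ⁿ : Σ_{j=0}^{n−1} c_j λ^{ij} = 0 for all i ∈ Z}. Then C is an MDS code with parameters [n, n−2δ, 2δ+1]: its dimension over F_{q²} is n−2δ and its minimum Hamming distance is exactly 2δ+1. -/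
open Polynomial

section helpers

variable {K : Type*} [Field K]

/-- linear "coefficient vector to polynomial" map -/
noncomputable def polyOfL (K : Type*) [Field K] (N : ℕ) : (Fin N → K) →ₗ[K] K[X] :=
  ∑ j : Fin N, (Polynomial.monomial (j : ℕ)).comp (LinearMap.proj j)

lemma polyOfL_apply {N : ℕ} (c : Fin N → K) :
    polyOfL K N c = ∑ j : Fin N, Polynomial.monomial (j : ℕ) (c j) := by
  simp [polyOfL, LinearMap.sum_apply]

lemma coeff_polyOfL {N : ℕ} (c : Fin N → K) (i : ℕ) :
    (polyOfL K N c).coeff i = if h : i < N then c ⟨i, h⟩ else 0 := by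
  rw [polyOfL_apply, finset_sum_coeff]
  simp_rw [coeff_monomial]
  by_cases h : i < N
  · rw [dif_pos h, Finset.sum_eq_single (⟨i, h⟩ : Fin N)]
    · simp
    · intro b _ hb
      rw [if_neg]
      intro hbi
      exact hb (by ext; exact hbi)
    · simp
  · rw [dif_neg h, Finset.sum_eq_zero]
    intro b _
    rw [if_neg]
    intro hbi
    exact h (hbi ▸ b.2)

lemma degree_polyOfL_lt {N : ℕ} (c : Fin N → K) : (polyOfL K N c).degree < (N : ℕ) := by
  rw [polyOfL_apply]
  refine lt_of_le_of_lt (degree_sum_le _ _) ?_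
  rw [Finset.sup_lt_iff (by exact WithBot.bot_lt_coe _)]
  intro j _
  exact lt_of_le_of_lt (degree_monomial_le _ _) (by exact_mod_cast j.2)

lemma polyOfL_coeffs {N : ℕ} {P : K[X]} (h : P.degree < (N : ℕ)) :
    polyOfL K N (fun j : Fin N => P.coeff (j : ℕ)) = P := by
  ext i
  rw [coeff_polyOfL]
  by_cases hi : i < N
  · rw [dif_pos hi]
  · rw [dif_neg hi]
    exact (coeff_eq_zero_of_degree_lt (lt_of_lt_of_le h (by exact_mod_cast Nat.le_of_not_lt hi))).symm


lemma coeff_polyOfL_fin {N : ℕ} (c : Fin N → K) (j : Fin N) :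
    (polyOfL K N c).coeff (j : ℕ) = c j := by
  rw [coeff_polyOfL, dif_pos j.isLt]

end helpers
open Polynomial

/-- fixed points of `y ↦ y ^ card F` in an `F`-algebra field lie in the image of `F`. -/
lemma mem_range_algebraMap_of_pow_card {F E : Type*} [Field F] [Fintype F]
    [Field E] [Algebra F E] {y : E} (hy : y ^ Fintype.card F = y) :
    y ∈ Set.range (algebraMap F E) := by
  classical
  set Q := Fintype.card F with hQdef
  have hQ : 1 < Q := Fintype.one_lt_card
  set P : E[X] := X ^ Q - X with hP
  have hPdeg : P.natDegree = Q := by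
    have h1 : (X : E[X]).natDegree < (X ^ Q : E[X]).natDegree := by
      simp only [natDegree_X_pow, natDegree_X]; omega
    rw [hP, natDegree_sub_eq_left_of_natDegree_lt h1, natDegree_X_pow]
  have hPne : P ≠ 0 := by
    intro h0
    rw [h0, natDegree_zero] at hPdeg
    omega
  by_contra hy'
  have hyT : y ∉ Finset.image (algebraMap F E) Finset.univ := by
    intro hmem
    rcases Finset.mem_image.mp hmem with ⟨x, _, hx⟩
    exact hy' ⟨x, hx⟩
  have hsub : (insert y (Finset.image (algebraMap F E) Finset.univ)).val ⊆ P.roots := by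
    intro z hz
    have hz' : z = y ∨ z ∈ Finset.image (algebraMap F E) Finset.univ := by
      simpa using hz
    have hroot : z ^ Q = z := by
      rcases hz' with rfl | hz'
      · exact hy
      · rcases Finset.mem_image.mp hz' with ⟨x, _, rfl⟩
        rw [← map_pow, FiniteField.pow_card]
    rw [mem_roots hPne]
    simp [IsRoot, hP, hroot]
  have hcard : (insert y (Finset.image (algebraMap F E) Finset.univ)).card = Q + 1 := by
    rw [Finset.card_insert_of_notMem hyT,
      Finset.card_image_of_injective _ (algebraMap F E).injective, Finset.card_univ]
  have := card_le_degree_of_subset_roots hsub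
  omega

/-- descent of divisibility along a field embedding for monic polynomials -/
lemma dvd_of_map_dvd {K L : Type*} [Field K] [Field L] (f : K →+* L) {g P : K[X]}
    (hg : g.Monic) (h : g.map f ∣ P.map f) : g ∣ P := by
  rw [← modByMonic_eq_zero_iff_dvd hg]
  have h2 : (P %ₘ g).map f = 0 := by
    rw [map_modByMonic f hg, modByMonic_eq_zero_iff_dvd (hg.map f)]
    exact h
  exact (Polynomial.map_eq_zero_iff f.injective).mp h2

/-- product of `X - r t` over distinct roots divides -/
lemma prod_X_sub_C_dvd_of_roots {L : Type*} [Field L] {M : ℕ} {r : ℕ → L}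
    (hinj : ∀ t1 < M, ∀ t2 < M, r t1 = r t2 → t1 = t2) {P : L[X]}
    (hroot : ∀ t < M, P.IsRoot (r t)) :
    (∏ t ∈ Finset.range M, (X - C (r t))) ∣ P := by
  classical
  rcases eq_or_ne P 0 with rfl | hP
  · exact dvd_zero _
  have key : ((Multiset.map r (Finset.range M).val).map fun a => X - C a).prod ∣ P := by
    rw [Multiset.prod_X_sub_C_dvd_iff_le_roots hP]
    refine (Multiset.le_iff_subset ?_).mpr ?_
    · refine Multiset.Nodup.map_on ?_ (Finset.range M).nodup
      intro x hx y hy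
      exact hinj x (Finset.mem_range.mp hx) y (Finset.mem_range.mp hy)
    · intro z hz
      rcases Multiset.mem_map.mp hz with ⟨t, ht, rfl⟩
      rw [mem_roots hP]
      exact hroot t (by simpa using ht)
  simpa [Finset.prod] using key

/-- Vandermonde system has only the zero solution -/
lemma vandermonde_eq_zero {L : Type*} [Field L] {w : ℕ} {x b : Fin w → L}
    (hx : Function.Injective x) (h : ∀ t : Fin w, ∑ j, b j * x j ^ (t : ℕ) = 0) : b = 0 := by
  have hdet : IsUnit (Matrix.vandermonde x).det := by
    rw [isUnit_iff_ne_zero, Matrix.det_vandermonde_ne_zero_iff]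
    exact hx
  have hvm : Matrix.vecMul b (Matrix.vandermonde x) = Matrix.vecMul 0 (Matrix.vandermonde x) := by
    funext t
    rw [Matrix.zero_vecMul]
    simpa [Matrix.vecMul, Matrix.vandermonde, dotProduct] using h t
  exact (Matrix.vecMul_injective_iff_isUnit.mpr ((Matrix.isUnit_iff_isUnit_det _).mpr hdet)) hvm

lemma caseIV_numeric {m a k q n s α δ : ℕ}
    (hm1 : 1 ≤ m) (hmodd : Odd m)
    (ha : a = m ^ 2 + 1)
    (hk : 1 ≤ k)
    (hq : q + m = 2 * a * k + 2 * a)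
    (hqodd : Odd q)
    (hn : n = (q ^ 2 + 1) / a)
    (hs : s = (n - 1) / 2)
    (hα1 : 1 ≤ α) (hαk : α ≤ k)
    (hδ : δ = α * q + (2 * a - m) * k + 2 * (a - m)) :
    a * n = q ^ 2 + 1 ∧ n = 2 * s + 1 ∧ 2 * δ + 1 ≤ n ∧ 1 ≤ δ := by
  have hma : m ≤ a := by nlinarith
  have hmq : m ≤ q := by nlinarith
  have hqpos : 1 ≤ q := hqodd.pos
  have hapos : 0 < a := by omega
  -- divisibility
  have hkey : q ^ 2 + 1 = (q + m) * (q - m) + a := by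
    zify [hmq]
    rw [ha]
    push_cast
    ring
  have hdvd : a ∣ q ^ 2 + 1 := by
    rw [hkey]
    exact dvd_add (Dvd.dvd.mul_right ⟨2 * (k + 1), by rw [hq]; ring⟩ _) dvd_rfl
  have han : a * n = q ^ 2 + 1 := by
    rw [hn, Nat.mul_div_cancel' hdvd]
  -- n is odd
  obtain ⟨t, ht⟩ := hmodd
  obtain ⟨u, hu⟩ := hqodd
  have e1 : a = 2 * (2 * t ^ 2 + 2 * t + 1) := by rw [ha, ht]; ring
  have e2 : q ^ 2 + 1 = 2 * (2 * u ^ 2 + 2 * u + 1) := by rw [hu]; ring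
  have e3 : (2 * t ^ 2 + 2 * t + 1) * n = 2 * u ^ 2 + 2 * u + 1 := by
    have : 2 * ((2 * t ^ 2 + 2 * t + 1) * n) = 2 * (2 * u ^ 2 + 2 * u + 1) := by
      rw [← e2, ← han, e1]; ring
    omega
  have hnodd : Odd n := by
    have hb : Odd ((2 * t ^ 2 + 2 * t + 1) * n) := by
      rw [e3]; exact ⟨u ^ 2 + u, by ring⟩
    exact (Nat.odd_mul.mp hb).2
  have hnpos : 0 < n := by
    rcases Nat.eq_zero_or_pos n with h0 | h; · rw [h0] at han; omega
    exact h
  have hns : n = 2 * s + 1 := by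
    obtain ⟨v, hv⟩ := hnodd; omega
  -- the key identity
  have hQZ : (q : ℤ) = 2 * a * k + 2 * a - m := by
    have := congrArg (fun x : ℕ => (x : ℤ)) hq
    push_cast at this
    linarith
  have hid : 2 * a * (k * q + (2 * a - m) * k + 2 * (a - m)) + m ^ 2 = q ^ 2 := by
    zify [hma, hmq, (by omega : m ≤ 2 * a)]
    linear_combination (-(q : ℤ) - 2 * a + m) * hQZ
  have hδle : δ ≤ k * q + (2 * a - m) * k + 2 * (a - m) := by
    rw [hδ]
    have : α * q ≤ k * q := Nat.mul_le_mul_right _ hαk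
    omega
  have h2δ : a * (2 * δ) ≤ a * (n - 1) := by
    have h1 : 2 * a * δ + m ^ 2 ≤ q ^ 2 := by
      calc 2 * a * δ + m ^ 2 ≤ 2 * a * (k * q + (2 * a - m) * k + 2 * (a - m)) + m ^ 2 :=
            by have := Nat.mul_le_mul_left (2 * a) hδle; omega
        _ = q ^ 2 := hid
    have h4 : a * (n - 1) + a * 1 = a * n := by
      rw [← Nat.mul_add, Nat.sub_add_cancel hnpos]
    have h5 : a * (2 * δ) = 2 * a * δ := by ring
    linarith
  have h2δn : 2 * δ ≤ n - 1 := Nat.le_of_mul_le_mul_left h2δ hapos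
  have hδ1 : 1 ≤ δ := by
    have : 1 * 1 ≤ α * q := Nat.mul_le_mul hα1 hqpos
    omega
  exact ⟨han, hns, by omega, hδ1⟩

/-- Case IV, q = 2ak+2a−m: the cyclic code over F_{q²} of length n = (q²+1)/a with
defining set Z = C_{s+1} ∪ ⋯ ∪ C_{s+δ} is an MDS code with parameters
[n, n−2δ, 2δ+1]: it is an F-subspace of dimension n−2δ, every nonzero codeword has
Hamming weight at least 2δ+1, and some nonzero codeword has Hamming weight exactly 2δ+1. -/
theorem mds_cyclic_code_case_IV
    (m a k q n s α δ : ℕ)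
    (hm1 : 1 ≤ m) (hmodd : Odd m)
    (ha : a = m ^ 2 + 1)
    (hk : 1 ≤ k)
    (hq : q + m = 2 * a * k + 2 * a)
    (hqodd : Odd q) (hqpp : IsPrimePow q)
    (hn : n = (q ^ 2 + 1) / a)
    (hs : s = (n - 1) / 2)
    (hα1 : 1 ≤ α) (hαk : α ≤ k)
    (hδ : δ = α * q + (2 * a - m) * k + 2 * (a - m))
    (F : Type*) [Field F] [Fintype F] [DecidableEq F]
    (hF : Fintype.card F = q ^ 2)
    (E : Type*) [Field E] [Algebra F E]
    (lam : E) (hlam : IsPrimitiveRoot lam n)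
    (Z : Set (ZMod n))
    (hZ : Z = {x : ZMod n | ∃ i : ℕ, 1 ≤ i ∧ i ≤ δ ∧
      (x = ((s + i : ℕ) : ZMod n) ∨ x = -((s + i : ℕ) : ZMod n))})
    (C : Set (Fin n → F))
    (hC : C = {c : Fin n → F | ∀ i : ZMod n, i ∈ Z →
      ∑ j : Fin n, algebraMap F E (c j) * lam ^ (i.val * (j : ℕ)) = 0}) :
    (∃ W : Submodule F (Fin n → F), (W : Set (Fin n → F)) = C ∧
      Module.finrank F W = n - 2 * δ) ∧
    (∀ c ∈ C, c ≠ 0 → 2 * δ + 1 ≤ hammingNorm c) ∧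
    (∃ c ∈ C, c ≠ 0 ∧ hammingNorm c = 2 * δ + 1) := by
  classical
  obtain ⟨han, hns, h2δ1n, hδ1⟩ :=
    caseIV_numeric hm1 hmodd ha hk hq hqodd hn hs hα1 hαk hδ
  have hnpos : 0 < n := by omega
  have hδs : δ ≤ s := by omega
  haveI : NeZero n := ⟨by omega⟩
  have hlam1 : lam ^ n = 1 := hlam.pow_eq_one
  have hlamne : lam ≠ 0 := hlam.ne_zero (by omega)
  -- the run of exponents
  set u : ℕ → ℕ := fun t => s + 1 - δ + t with hu_def
  have hu : ∀ t, u t = s + 1 - δ + t := fun t => rfl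
  have hu_lt : ∀ t, t < 2 * δ → u t < n := by intro t ht; rw [hu]; omega
  have hlam_inj : ∀ t1 < 2 * δ, ∀ t2 < 2 * δ, lam ^ u t1 = lam ^ u t2 → t1 = t2 := by
    intro t1 h1 t2 h2 hl
    have := hlam.pow_inj (hu_lt t1 h1) (hu_lt t2 h2) hl
    rw [hu, hu] at this; omega
  -- characteristic
  obtain ⟨r, i, hrp, hipos, hriq⟩ := hqpp
  have hrnat : Nat.Prime r := Nat.prime_iff.mpr hrp
  haveI hcharF : CharP F r := by
    obtain ⟨np, hpprime, hcardp⟩ := FiniteField.card F (ringChar F)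
    have h1 : r ^ (2 * i) = ringChar F ^ (np : ℕ) := by
      rw [← hcardp, hF, ← hriq]; ring
    have h2 : r = ringChar F := by
      have hdvd : r ∣ ringChar F ^ (np : ℕ) := h1 ▸ dvd_pow_self r (by omega)
      exact (Nat.prime_dvd_prime_iff_eq hrnat hpprime).mp (hrnat.dvd_of_dvd_pow hdvd)
    rw [h2]; infer_instance
  haveI hcharE : CharP E r := charP_of_injective_algebraMap (algebraMap F E).injective r
  haveI : ExpChar E r := ExpChar.prime hrnat
  set φ : E →+* E := iterateFrobenius E r (2 * i) with hφ_def
  have hφ : ∀ x : E, φ x = x ^ q ^ 2 := by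
    intro x
    rw [hφ_def, iterateFrobenius_def]
    congr 1
    rw [← hriq]; ring
  have hφfix : ∀ x : F, φ (algebraMap F E x) = algebraMap F E x := by
    intro x
    rw [hφ, ← map_pow, ← hF, FiniteField.pow_card]
  have hφlam : ∀ t, t < 2 * δ → φ (lam ^ u t) = lam ^ u (2 * δ - 1 - t) := by
    intro t ht
    have hsum : u t + u (2 * δ - 1 - t) = n := by rw [hu, hu]; omega
    have hne : lam ^ u t ≠ 0 := pow_ne_zero _ hlamne
    have h1 : φ (lam ^ u t) * lam ^ u t = 1 := by
      rw [hφ, ← pow_mul, ← pow_add]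
      have hee : u t * q ^ 2 + u t = n * (u t * a) := by
        calc u t * q ^ 2 + u t = u t * (q ^ 2 + 1) := by ring
          _ = u t * (a * n) := by rw [han]
          _ = n * (u t * a) := by ring
      rw [hee, pow_mul, hlam1, one_pow]
    have h2 : lam ^ u (2 * δ - 1 - t) * lam ^ u t = 1 := by
      rw [← pow_add, add_comm, hsum, hlam1]
    exact mul_right_cancel₀ hne (h1.trans h2.symm)
  -- the generator polynomial over E
  set g : Polynomial E := ∏ t ∈ Finset.range (2 * δ), (Polynomial.X - Polynomial.C (lam ^ u t))
    with hg_def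
  have hgmonic : g.Monic :=
    Polynomial.monic_prod_of_monic _ _ (fun t _ => Polynomial.monic_X_sub_C _)
  have hgdeg : g.natDegree = 2 * δ := by
    rw [hg_def, Polynomial.natDegree_prod_of_monic _ _ (fun t _ => Polynomial.monic_X_sub_C _),
      Finset.sum_congr rfl (fun t _ => Polynomial.natDegree_X_sub_C (lam ^ u t)),
      Finset.sum_const, Finset.card_range, smul_eq_mul, mul_one]
  have hgmap : g.map φ = g := by
    rw [hg_def, Polynomial.map_prod]
    simp only [Polynomial.map_sub, Polynomial.map_X, Polynomial.map_C]
    calc (∏ t ∈ Finset.range (2 * δ), (Polynomial.X - Polynomial.C (φ (lam ^ u t))))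
        = ∏ t ∈ Finset.range (2 * δ), (Polynomial.X - Polynomial.C (lam ^ u (2 * δ - 1 - t))) := by
          refine Finset.prod_congr rfl fun t ht => ?_
          rw [hφlam t (Finset.mem_range.mp ht)]
      _ = ∏ t ∈ Finset.range (2 * δ), (Polynomial.X - Polynomial.C (lam ^ u t)) :=
          Finset.prod_range_reflect (fun j => Polynomial.X - Polynomial.C (lam ^ u j)) (2 * δ)
  have hglifts : g ∈ Polynomial.lifts (algebraMap F E) := by
    rw [Polynomial.lifts_iff_coeff_lifts]
    intro idx
    apply mem_range_algebraMap_of_pow_card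
    have hcoe := congrArg (fun P : Polynomial E => P.coeff idx) hgmap
    simp only [Polynomial.coeff_map] at hcoe
    rw [hφ] at hcoe
    rw [hF]
    exact hcoe
  obtain ⟨gF, hgFmap, hgFdeg, hgFmonic⟩ :=
    Polynomial.lifts_and_natDegree_eq_and_monic hglifts hgmonic
  have hgFnatdeg : gF.natDegree = 2 * δ := by rw [hgFdeg, hgdeg]
  have hgFne : gF ≠ 0 := hgFmonic.ne_zero
  -- sum as evaluation
  have hsum_eval : ∀ (c : Fin n → F) (v : ℕ),
      (∑ j : Fin n, algebraMap F E (c j) * lam ^ (v * (j : ℕ)))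
        = Polynomial.eval (lam ^ v) ((polyOfL F n c).map (algebraMap F E)) := by
    intro c v
    rw [polyOfL_apply, Polynomial.map_sum, Polynomial.eval_finset_sum]
    refine Finset.sum_congr rfl fun j _ => ?_
    rw [Polynomial.map_monomial, Polynomial.eval_monomial, ← pow_mul]
  have hneg : ∀ i' : ℕ, 1 ≤ i' → i' ≤ δ →
      -((s + i' : ℕ) : ZMod n) = ((s + 1 - i' : ℕ) : ZMod n) := by
    intro i' h1 h2
    have hsumn : (s + i') + (s + 1 - i') = n := by omega
    have hz : ((s + i' : ℕ) : ZMod n) + ((s + 1 - i' : ℕ) : ZMod n) = 0 := by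
      rw [← Nat.cast_add, hsumn, ZMod.natCast_self]
    exact neg_eq_of_add_eq_zero_right hz
  have hZmem : ∀ t, t < 2 * δ → ((u t : ℕ) : ZMod n) ∈ Z := by
    intro t ht
    rw [hZ]
    by_cases hts : δ ≤ t
    · exact ⟨t + 1 - δ, by omega, by omega, Or.inl (by rw [hu]; congr 1; omega)⟩
    · refine ⟨δ - t, by omega, by omega, Or.inr ?_⟩
      rw [hneg _ (by omega) (by omega), hu]
      congr 1
      omega
  have hZrep : ∀ i ∈ Z, ∃ t, t < 2 * δ ∧ i = ((u t : ℕ) : ZMod n) := by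
    intro i hi
    rw [hZ] at hi
    obtain ⟨i', h1, h2, hcase⟩ := hi
    rcases hcase with hl | hr
    · exact ⟨δ - 1 + i', by omega, by rw [hl, hu]; congr 1; omega⟩
    · refine ⟨δ - i', by omega, ?_⟩
      rw [hr, hneg i' h1 h2, hu]
      congr 1
      omega
  have hval : ∀ t, t < 2 * δ → (((u t : ℕ) : ZMod n)).val = u t :=
    fun t ht => ZMod.val_cast_of_lt (hu_lt t ht)
  -- membership characterization
  have key1 : ∀ c : Fin n → F, c ∈ C ↔ gF ∣ polyOfL F n c := by
    intro c
    rw [hC, Set.mem_setOf_eq]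
    constructor
    · intro hc
      have hroots : ∀ t, t < 2 * δ →
          ((polyOfL F n c).map (algebraMap F E)).IsRoot (lam ^ u t) := by
        intro t ht
        have hi := hc _ (hZmem t ht)
        rw [hval t ht] at hi
        rw [Polynomial.IsRoot, ← hsum_eval]
        exact hi
      have hgdvd : g ∣ (polyOfL F n c).map (algebraMap F E) :=
        prod_X_sub_C_dvd_of_roots hlam_inj hroots
      refine dvd_of_map_dvd (algebraMap F E) hgFmonic ?_
      rw [hgFmap]
      exact hgdvd
    · intro hdvd i hi
      obtain ⟨t, ht, rfl⟩ := hZrep i hi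
      rw [hval t ht, hsum_eval]
      have h1 : (Polynomial.X - Polynomial.C (lam ^ u t)) ∣
          (polyOfL F n c).map (algebraMap F E) := by
        refine dvd_trans ?_ (hgFmap ▸ Polynomial.map_dvd (algebraMap F E) hdvd)
        exact Finset.dvd_prod_of_mem _ (Finset.mem_range.mpr ht)
      exact (Polynomial.dvd_iff_isRoot).mp h1
  -- the submodule
  set NN := n - 2 * δ with hNN
  have hNNpos : 0 < NN := by omega
  set W : Submodule F (Fin n → F) :=
    Submodule.comap (polyOfL F n) ((Ideal.span {gF}).restrictScalars F) with hW_def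
  have hWmem : ∀ c : Fin n → F, c ∈ W ↔ gF ∣ polyOfL F n c := by
    intro c
    rw [hW_def, Submodule.mem_comap, Submodule.restrictScalars_mem, Ideal.mem_span_singleton]
  have hWC : (W : Set (Fin n → F)) = C := by
    ext c
    rw [SetLike.mem_coe, hWmem, ← key1]
  set Φ : (Fin NN → F) →ₗ[F] (Fin n → F) :=
    (LinearMap.pi fun j : Fin n => Polynomial.lcoeff F (j : ℕ)).comp
      ((LinearMap.mulLeft F gF).comp (polyOfL F NN)) with hΦ_def
  have hΦapp : ∀ (h : Fin NN → F) (j : Fin n), Φ h j = (gF * polyOfL F NN h).coeff (j : ℕ) := by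
    intro h j
    rw [hΦ_def]
    simp [LinearMap.pi_apply, Polynomial.lcoeff_apply, LinearMap.mulLeft_apply]
  have hdeg_mul : ∀ h : Fin NN → F, (gF * polyOfL F NN h).degree < (n : ℕ) := by
    intro h
    rcases eq_or_ne (polyOfL F NN h) 0 with h0 | h0
    · rw [h0, mul_zero, Polynomial.degree_zero]
      exact WithBot.bot_lt_coe _
    · rw [Polynomial.degree_mul, Polynomial.degree_eq_natDegree hgFne,
        Polynomial.degree_eq_natDegree h0, hgFnatdeg]
      have hlt : (polyOfL F NN h).natDegree < NN :=
        (Polynomial.natDegree_lt_iff_degree_lt h0).mpr (degree_polyOfL_lt h)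
      exact_mod_cast (show 2 * δ + (polyOfL F NN h).natDegree < n by omega)
  have hpoly_phi : ∀ h : Fin NN → F, polyOfL F n (Φ h) = gF * polyOfL F NN h := by
    intro h
    have heq := polyOfL_coeffs (K := F) (N := n) (hdeg_mul h)
    rw [← heq]
    congr 1
  have hrange : LinearMap.range Φ = W := by
    ext c
    simp only [LinearMap.mem_range]
    constructor
    · rintro ⟨h, rfl⟩
      rw [hWmem, hpoly_phi]
      exact dvd_mul_right _ _
    · intro hcW
      rw [hWmem] at hcW
      obtain ⟨Qp, hQp⟩ := hcW
      rcases eq_or_ne Qp 0 with rfl | hQ0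
      · have hc0 : polyOfL F n c = 0 := by rw [hQp, mul_zero]
        refine ⟨0, ?_⟩
        have hcz : c = 0 := by
          funext j
          have hcj := coeff_polyOfL_fin c j
          rw [hc0, Polynomial.coeff_zero] at hcj
          exact hcj.symm
        rw [map_zero, hcz]
      · have hdegQ : Qp.degree < (NN : ℕ) := by
          have hdc : (polyOfL F n c).degree < (n : ℕ) := degree_polyOfL_lt c
          rw [hQp, Polynomial.degree_mul, Polynomial.degree_eq_natDegree hgFne,
            Polynomial.degree_eq_natDegree hQ0, hgFnatdeg] at hdc
          have hlt : 2 * δ + Qp.natDegree < n := by exact_mod_cast hdc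
          rw [Polynomial.degree_eq_natDegree hQ0]
          exact_mod_cast (show Qp.natDegree < NN by omega)
        refine ⟨fun t : Fin NN => Qp.coeff (t : ℕ), ?_⟩
        funext j
        rw [hΦapp, polyOfL_coeffs hdegQ, ← hQp, coeff_polyOfL_fin]
  have hinjΦ : Function.Injective Φ := by
    have hker : ∀ h, Φ h = 0 → h = 0 := by
      intro h hh
      have hP0 : gF * polyOfL F NN h = 0 := by
        have h1 := hpoly_phi h
        rw [hh, map_zero] at h1
        exact h1.symm
      have h2 : polyOfL F NN h = 0 := by
        rcases mul_eq_zero.mp hP0 with h' | h'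
        · exact absurd h' hgFne
        · exact h'
      funext t
      have hcj := coeff_polyOfL_fin h t
      rw [h2, Polynomial.coeff_zero] at hcj
      exact hcj.symm
    exact LinearMap.ker_eq_bot.mp (LinearMap.ker_eq_bot'.mpr hker)
  have hfinrank : Module.finrank F W = NN := by
    rw [← hrange, LinearMap.finrank_range_of_inj hinjΦ, Module.finrank_fin_fun]
  -- lower bound on weight
  have hlower : ∀ c ∈ C, c ≠ 0 → 2 * δ + 1 ≤ hammingNorm c := by
    intro c hcC hc0
    rw [hC, Set.mem_setOf_eq] at hcC
    by_contra hlt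
    push_neg at hlt
    set S : Finset (Fin n) := Finset.univ.filter (fun j => c j ≠ 0) with hS_def
    have hScard : hammingNorm c = S.card := rfl
    set w := S.card with hw
    have hwle : w ≤ 2 * δ := by omega
    set e : Fin w ≃ {j // j ∈ S} := S.equivFin.symm with he
    set x : Fin w → E := fun j => lam ^ (((e j : Fin n)) : ℕ) with hx
    set b : Fin w → E := fun j =>
      algebraMap F E (c (e j)) * lam ^ ((s + 1 - δ) * (((e j : Fin n)) : ℕ)) with hb
    have hxinj : Function.Injective x := by
      intro j1 j2 hx12
      have h1 : (((e j1 : Fin n)) : ℕ) = (((e j2 : Fin n)) : ℕ) :=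
        hlam.pow_inj (Fin.is_lt _) (Fin.is_lt _) hx12
      exact e.injective (Subtype.ext (Fin.ext h1))
    have hvdm : ∀ t : Fin w, ∑ j, b j * x j ^ (t : ℕ) = 0 := by
      intro t
      have ht2 : (t : ℕ) < 2 * δ := lt_of_lt_of_le t.isLt hwle
      have hi := hcC _ (hZmem t ht2)
      rw [hval _ ht2] at hi
      have hrestrict : ∑ j ∈ S, algebraMap F E (c j) * lam ^ (u (t : ℕ) * (j : ℕ)) = 0 := by
        rw [← hi]
        refine Finset.sum_subset (Finset.subset_univ S) (fun j _ hj => ?_)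
        have hcj : c j = 0 := by
          by_contra hne
          exact hj (Finset.mem_filter.mpr ⟨Finset.mem_univ j, hne⟩)
        rw [hcj, map_zero, zero_mul]
      have hexp : ∀ ej : ℕ, (s + 1 - δ) * ej + ej * (t : ℕ) = u (t : ℕ) * ej := by
        intro ej
        rw [hu]
        generalize (s + 1 - δ) = u0
        ring
      calc ∑ j : Fin w, b j * x j ^ (t : ℕ)
          = ∑ j : Fin w, algebraMap F E (c (e j)) * lam ^ (u (t : ℕ) * (((e j : Fin n)) : ℕ)) := by
            refine Finset.sum_congr rfl fun j _ => ?_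
            rw [hb, hx, ← pow_mul, mul_assoc, ← pow_add, hexp]
        _ = ∑ jj : {j // j ∈ S}, algebraMap F E (c jj) * lam ^ (u (t : ℕ) * ((jj : Fin n) : ℕ)) :=
            Equiv.sum_comp e (fun jj : {j // j ∈ S} =>
              algebraMap F E (c jj) * lam ^ (u (t : ℕ) * ((jj : Fin n) : ℕ)))
        _ = ∑ j ∈ S, algebraMap F E (c j) * lam ^ (u (t : ℕ) * (j : ℕ)) :=
            Finset.sum_coe_sort S (fun j => algebraMap F E (c j) * lam ^ (u (t : ℕ) * (j : ℕ)))
        _ = 0 := hrestrict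
    have hball := vandermonde_eq_zero hxinj hvdm
    have hex : ∃ j0, c j0 ≠ 0 := by
      by_contra hno
      push_neg at hno
      exact hc0 (funext hno)
    obtain ⟨j0, hj0⟩ := hex
    have hj0S : j0 ∈ S := Finset.mem_filter.mpr ⟨Finset.mem_univ _, hj0⟩
    have hb0 : b (e.symm ⟨j0, hj0S⟩) = 0 := by rw [hball]; rfl
    simp only [hb, Equiv.apply_symm_apply] at hb0
    rcases mul_eq_zero.mp hb0 with h' | h'
    · exact hj0 ((map_eq_zero_iff _ (algebraMap F E).injective).mp h')
    · exact (pow_ne_zero _ hlamne) h'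
  -- the witness codeword: coefficients of gF
  have hlastlt : 2 * δ < n := by omega
  set cg : Fin n → F := fun j => gF.coeff (j : ℕ) with hcg
  have hdeg_gF_lt : gF.degree < (n : ℕ) := by
    rw [Polynomial.degree_eq_natDegree hgFne, hgFnatdeg]
    exact_mod_cast hlastlt
  have hpolycg : polyOfL F n cg = gF := polyOfL_coeffs hdeg_gF_lt
  have hcgC : cg ∈ C := (key1 cg).mpr (by rw [hpolycg])
  have hcg0 : cg ≠ 0 := by
    intro h0
    have h1 := congrFun h0 ⟨2 * δ, hlastlt⟩
    have h2 : gF.coeff (2 * δ) = 1 := by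
      have := hgFmonic.coeff_natDegree
      rwa [hgFnatdeg] at this
    rw [hcg] at h1
    simp only [Pi.zero_apply] at h1
    rw [h2] at h1
    exact one_ne_zero h1
  have hupper : hammingNorm cg ≤ 2 * δ + 1 := by
    have hsub : (Finset.univ.filter (fun j => cg j ≠ 0) : Finset (Fin n)) ⊆
        Finset.image (fun i : Fin (2 * δ + 1) => Fin.castLE (by omega : 2 * δ + 1 ≤ n) i)
          Finset.univ := by
      intro j hj
      have hjne : cg j ≠ 0 := (Finset.mem_filter.mp hj).2
      have hjle : (j : ℕ) ≤ 2 * δ := by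
        by_contra hgt
        refine hjne ?_
        rw [hcg]
        exact Polynomial.coeff_eq_zero_of_natDegree_lt (by rw [hgFnatdeg]; omega)
      refine Finset.mem_image.mpr ⟨⟨(j : ℕ), by omega⟩, Finset.mem_univ _, ?_⟩
      ext
      simp [Fin.castLE]
    have hcard : hammingNorm cg = (Finset.univ.filter (fun j => cg j ≠ 0) : Finset (Fin n)).card :=
      rfl
    calc hammingNorm cg
        = (Finset.univ.filter (fun j => cg j ≠ 0) : Finset (Fin n)).card := hcard
      _ ≤ (Finset.image (fun i : Fin (2 * δ + 1) =>
            Fin.castLE (by omega : 2 * δ + 1 ≤ n) i) Finset.univ).card :=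
          Finset.card_le_card hsub
      _ ≤ (Finset.univ : Finset (Fin (2 * δ + 1))).card := Finset.card_image_le
      _ = 2 * δ + 1 := by simp
  refine ⟨⟨W, hWC, hfinrank⟩, hlower, cg, hcgC, hcg0,
    le_antisymm hupper (hlower cg hcgC hcg0)⟩
end
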